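/- arXiv:1412.7798 — 7 statements merged into one kernel-verified Lean document; each statement's English description precedes it below -/
import Mathlib

section
/- Let H be a connected graph on n vertices, and let G be a connected spanning subgraph of H. If mc(H) = m(H) - n + 2, then mc(G) = m(G) - n + 2, where m(H) and m(G) denote the number of edges of H and G respectively. -/
/-- An edge-coloring `c` of a graph `G` is a *monochromatic connection coloring*
(MC-coloring) if any two vertices are joined by a path all of whose edges
receive the same color. -/
def IsMCColoring {V : Type*} (G : SimpleGraph V) (c : Sym2 V → ℕ) : Prop :=
  ∀ u v : V, ∃ p : G.Walk u v, p.IsPath ∧ ∃ k : ℕ, ∀ e ∈ p.edges, c e = k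

/-- The *monochromatic connection number* `mc(G)`: the maximum number of colors
used in an MC-coloring of `G`. -/
noncomputable def mcNumber {V : Type*} (G : SimpleGraph V) : ℕ :=
  sSup {k | ∃ c : Sym2 V → ℕ, IsMCColoring G c ∧ (c '' G.edgeSet).ncard = k}

def mcSet {V : Type*} (G : SimpleGraph V) : Set ℕ :=
  {k | ∃ c : Sym2 V → ℕ, IsMCColoring G c ∧ (c '' G.edgeSet).ncard = k}

lemma mcNumber_eq {V : Type*} (G : SimpleGraph V) : mcNumber G = sSup (mcSet G) := rfl

lemma mcSet_nonempty {V : Type*} (G : SimpleGraph V) (hG : G.Connected) :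
    (mcSet G).Nonempty := by
  classical
  refine ⟨_, fun _ => 0, fun u v => ?_, rfl⟩
  obtain ⟨w⟩ := hG u v
  exact ⟨w.toPath, w.toPath.2, 0, fun _ _ => rfl⟩

lemma mcSet_bdd {V : Type*} [Fintype V] (G : SimpleGraph V) :
    ∀ k ∈ mcSet G, k ≤ G.edgeSet.ncard := by
  rintro k ⟨c, _, rfl⟩
  exact Set.ncard_image_le G.edgeSet.toFinite

lemma mcSet_bddAbove {V : Type*} [Fintype V] (G : SimpleGraph V) :
    BddAbove (mcSet G) := ⟨G.edgeSet.ncard, mcSet_bdd G⟩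

lemma mcSet_ext {V : Type*} [Fintype V] {G H : SimpleGraph V} (hsub : G ≤ H) {k : ℕ}
    (hk : k ∈ mcSet G) : k + (H.edgeSet \ G.edgeSet).ncard ∈ mcSet H := by
  classical
  obtain ⟨c, hc, rfl⟩ := hk
  obtain ⟨f, hf⟩ := Countable.exists_injective_nat (Sym2 V)
  refine ⟨fun e => if e ∈ G.edgeSet then 2 * c e else 2 * f e + 1, ?_, ?_⟩
  · intro u v
    obtain ⟨p, hp, k₀, hk₀⟩ := hc u v
    refine ⟨p.mapLe hsub, hp.mapLe hsub, 2 * k₀, ?_⟩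
    intro e he
    have he' : e ∈ p.edges := by
      simpa [SimpleGraph.Walk.mapLe, SimpleGraph.Walk.edges_map, Sym2.map_id'] using he
    have : e ∈ G.edgeSet := p.edges_subset_edgeSet he'
    simp [this, hk₀ e he']
  · have hsplit : H.edgeSet = G.edgeSet ∪ (H.edgeSet \ G.edgeSet) :=
      (Set.union_diff_cancel (SimpleGraph.edgeSet_mono hsub)).symm
    conv_lhs => rw [hsplit]
    rw [Set.image_union]
    have h1 : (fun e => if e ∈ G.edgeSet then 2 * c e else 2 * f e + 1) '' G.edgeSet
        = (fun n => 2 * n) '' (c '' G.edgeSet) := by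
      rw [Set.image_image]
      exact Set.image_congr fun e he => by simp [he]
    have h2 : (fun e => if e ∈ G.edgeSet then 2 * c e else 2 * f e + 1) '' (H.edgeSet \ G.edgeSet)
        = (fun e => 2 * f e + 1) '' (H.edgeSet \ G.edgeSet) :=
      Set.image_congr fun e he => by simp [he.2]
    rw [h1, h2]
    have hd : Disjoint ((fun n => 2 * n) '' (c '' G.edgeSet))
        ((fun e => 2 * f e + 1) '' (H.edgeSet \ G.edgeSet)) := by
      rw [Set.disjoint_left]
      rintro x ⟨a, _, rfl⟩ ⟨b, _, hb⟩
      beta_reduce at hb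
      omega
    rw [Set.ncard_union_eq hd ((G.edgeSet.toFinite.image _).image _)
      (((H.edgeSet \ G.edgeSet).toFinite).image _)]
    congr 1
    · exact Set.ncard_image_of_injective _ (fun a b hab => by omega)
    · refine Set.ncard_image_of_injective _ (fun a b hab => hf ?_)
      omega

lemma del_conn {V : Type*} {G : SimpleGraph V} (hG : G.Connected) {a b : V}
    (hr : (G \ SimpleGraph.fromEdgeSet {s(a, b)}).Reachable a b) :
    (G \ SimpleGraph.fromEdgeSet {s(a, b)}).Connected := by
  rw [SimpleGraph.connected_iff]
  refine ⟨fun x y => ?_, hG.nonempty⟩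
  obtain ⟨p⟩ := hG x y
  induction p with
  | nil => exact .refl _
  | cons h q ih =>
    refine .trans ?_ ih
    rename_i x₁ x₂ _
    by_cases hev : s(x₁, x₂) = s(a, b)
    · rw [Sym2.eq_iff] at hev
      rcases hev with ⟨rfl, rfl⟩ | ⟨rfl, rfl⟩
      · exact hr
      · exact hr.symm
    · refine SimpleGraph.Adj.reachable ?_
      rw [SimpleGraph.sdiff_adj, SimpleGraph.fromEdgeSet_adj]
      exact ⟨h, fun hc => hev hc.1⟩

lemma lower_bound {V : Type*} [Fintype V] (m : ℕ) :
    ∀ G : SimpleGraph V, G.Connected → G.edgeSet.ncard = m → 2 ≤ Fintype.card V →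
      (G.edgeSet.ncard : ℤ) - Fintype.card V + 2 ≤ (↑(sSup (mcSet G)) : ℤ) := by
  induction m using Nat.strong_induction_on with
  | _ m ih =>
    intro G hG hm hcard
    classical
    by_cases hac : G.IsAcyclic
    · have htree : G.IsTree := ⟨hG, hac⟩
      have hncard : G.edgeSet.ncard + 1 = Fintype.card V := by
        rw [Set.ncard_eq_toFinset_card']
        simpa [SimpleGraph.edgeFinset] using htree.card_edgeFinset
      have hne : G.edgeSet.Nonempty := by
        apply Set.nonempty_of_ncard_ne_zero
        omega
      have h1 : 1 ∈ mcSet G := by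
        refine ⟨fun _ => 0, fun u v => ?_, ?_⟩
        · obtain ⟨w⟩ := hG u v
          exact ⟨w.toPath, w.toPath.2, 0, fun _ _ => rfl⟩
        · rw [hne.image_const, Set.ncard_singleton]
      have h2 : 1 ≤ sSup (mcSet G) := le_csSup (mcSet_bddAbove G) h1
      omega
    · rw [SimpleGraph.isAcyclic_iff_forall_edge_isBridge] at hac
      push_neg at hac
      obtain ⟨e, he, hb⟩ := hac
      revert he hb
      induction e using Sym2.ind with
      | _ a b =>
      intro he hb
      rw [SimpleGraph.isBridge_iff] at hb
      push_neg at hb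
      have hr : (G \ SimpleGraph.fromEdgeSet {s(a, b)}).Reachable a b := hb
      set G' := G \ SimpleGraph.fromEdgeSet {s(a, b)} with hG'
      have hG'conn : G'.Connected := del_conn hG hr
      have hG'edge : G'.edgeSet = G.edgeSet \ {s(a, b)} := by
        rw [hG', ← SimpleGraph.deleteEdges, SimpleGraph.edgeSet_deleteEdges]
      have hm' : G'.edgeSet.ncard = m - 1 := by
        rw [hG'edge, Set.ncard_diff_singleton_of_mem he, hm]
      have hmpos : 1 ≤ m := by
        rw [← hm]
        exact (Set.ncard_pos G.edgeSet.toFinite).mpr ⟨_, he⟩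
      have hih := ih (m - 1) (by omega) G' hG'conn hm' hcard
      have hmem : sSup (mcSet G') + (G.edgeSet \ G'.edgeSet).ncard ∈ mcSet G :=
        mcSet_ext (sdiff_le) (Nat.sSup_mem (mcSet_nonempty G' hG'conn) (mcSet_bddAbove G'))
      have hdiff : (G.edgeSet \ G'.edgeSet).ncard = 1 := by
        rw [hG'edge, Set.diff_diff_cancel_left (Set.singleton_subset_iff.mpr he)]
        exact Set.ncard_singleton _
      rw [hdiff] at hmem
      have hle : sSup (mcSet G') + 1 ≤ sSup (mcSet G) := le_csSup (mcSet_bddAbove G) hmem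
      omega

/-- If `H` is connected on `n` vertices with `mc(H) = m(H) - n + 2`, then any
connected spanning subgraph `G` of `H` satisfies `mc(G) = m(G) - n + 2`. -/
theorem stmt_0 {V : Type*} [Fintype V] (H G : SimpleGraph V)
    (hH : H.Connected) (hG : G.Connected) (hsub : G ≤ H)
    (h : (mcNumber H : ℤ) = (H.edgeSet.ncard : ℤ) - Fintype.card V + 2) :
    (mcNumber G : ℤ) = (G.edgeSet.ncard : ℤ) - Fintype.card V + 2 := by
  classical
  rw [mcNumber_eq] at h ⊢
  have hn1 : 1 ≤ Fintype.card V := @Fintype.card_pos V _ hH.nonempty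
  by_cases hn : 2 ≤ Fintype.card V
  · -- upper bound via extension, lower bound via lemma
    have hmem : sSup (mcSet G) + (H.edgeSet \ G.edgeSet).ncard ∈ mcSet H :=
      mcSet_ext hsub (Nat.sSup_mem (mcSet_nonempty G hG) (mcSet_bddAbove G))
    have hKI : sSup (mcSet G) + (H.edgeSet \ G.edgeSet).ncard ≤ sSup (mcSet H) :=
      le_csSup (mcSet_bddAbove H) hmem
    have hle : G.edgeSet.ncard ≤ H.edgeSet.ncard :=
      Set.ncard_le_ncard (SimpleGraph.edgeSet_mono hsub) H.edgeSet.toFinite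
    have hdiff : (H.edgeSet \ G.edgeSet).ncard = H.edgeSet.ncard - G.edgeSet.ncard :=
      Set.ncard_diff (SimpleGraph.edgeSet_mono hsub) G.edgeSet.toFinite
    have hLB := lower_bound G.edgeSet.ncard G hG rfl hn
    rw [hdiff] at hKI
    omega
  · -- card V = 1 : H has no edges
    have hVe : H.edgeSet = ∅ := by
      ext e
      simp only [Set.mem_empty_iff_false, iff_false]
      induction e using Sym2.ind with
      | _ a b =>
        intro hab
        have : a ≠ b := (H.mem_edgeSet.mp hab).ne
        exact hn (Fintype.one_lt_card_iff_nontrivial.mpr ⟨a, b, this⟩)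
    have hzero : sSup (mcSet H) = 0 := by
      refine Nat.le_zero.mp (csSup_le (mcSet_nonempty H hH) ?_)
      rintro k ⟨c, _, rfl⟩
      simp [hVe]
    rw [hzero, hVe, Set.ncard_empty] at h
    exact absurd h (by omega)
end

section
/- Let n and p be integers with 0 ≤ p ≤ C(n-1,2). Then every connected graph G with n vertices and m = C(n,2) - p edges satisfies mc(G) ≥ C(n,2) - 2p. -/
open SimpleGraph
open scoped Classical

set_option linter.unreachableTactic false
set_option linter.unusedTactic false

/-- Merging lemma: for any finite set of merge requests `S`, there is a coloring
constant on each requested pair, losing at most `S.card` colors. -/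
private lemma merge_lemma {V : Type*} [Fintype V] (A : Set (Sym2 V))
    (S : Finset (Sym2 V × Sym2 V)) :
    ∃ c : Sym2 V → ℕ, (∀ pr ∈ S, c pr.1 = c pr.2) ∧
      A.ncard ≤ (c '' A).ncard + S.card := by
  classical
  induction S using Finset.induction with
  | empty =>
    refine ⟨fun x => (Fintype.equivFin (Sym2 V) x : ℕ), by simp, ?_⟩
    rw [Set.ncard_image_of_injective _
      (fun a b h => (Fintype.equivFin (Sym2 V)).injective (Fin.val_injective h))]
    simp
  | @insert a s ha ih =>
    obtain ⟨c, hc, hcard⟩ := ih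
    set g : ℕ → ℕ := fun v => if v = c a.2 then c a.1 else v with hg
    refine ⟨g ∘ c, ?_, ?_⟩
    · intro pr hpr
      rcases Finset.mem_insert.1 hpr with h | h
      · subst h
        by_cases h1 : c pr.1 = c pr.2 <;> simp [hg, h1]
      · have h2 := hc pr h
        simp [hg, h2]
    · have himg : (g ∘ c) '' A = g '' (c '' A) := Set.image_comp g c A
      have h1 : (c '' A) \ {c a.2} ⊆ g '' (c '' A) := by
        intro v hv
        exact ⟨v, hv.1, if_neg hv.2⟩
      have h2 : ((c '' A) \ {c a.2}).ncard ≤ (g '' (c '' A)).ncard :=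
        Set.ncard_le_ncard h1 (Set.toFinite _)
      have h3 : (c '' A).ncard ≤ ((c '' A) \ {c a.2}).ncard + 1 := by
        by_cases hmem : c a.2 ∈ c '' A
        · rw [Set.ncard_diff_singleton_add_one hmem (Set.toFinite _)]
        · rw [Set.diff_singleton_eq_self hmem]
          omega
      rw [himg, Finset.card_insert_of_notMem ha]
      omega

/-- If the complement has few edges, nonadjacent vertices have a common neighbor. -/
private lemma common_nbr {V : Type*} [Fintype V] [DecidableEq V] {G : SimpleGraph V} {u v : V}
    (hne : u ≠ v) (huv : ¬ G.Adj u v)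
    (hcard : Gᶜ.edgeFinset.card + 2 ≤ Fintype.card V) :
    ∃ w, G.Adj u w ∧ G.Adj w v := by
  by_contra h
  push_neg at h
  set T : Finset V := (Finset.univ.erase u).erase v with hT
  set F : V → Sym2 V := fun w => if G.Adj u w then s(v, w) else s(u, w) with hF
  have hmaps : ∀ w ∈ T, F w ∈ Gᶜ.edgeFinset.erase s(u, v) := by
    intro w hw
    have hwv : w ≠ v := Finset.ne_of_mem_erase hw
    have hwu : w ≠ u := Finset.ne_of_mem_erase (Finset.mem_of_mem_erase hw)
    by_cases hadj : G.Adj u w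
    · have hnadj : ¬ G.Adj v w := fun hh => h w hadj hh.symm
      refine Finset.mem_erase.2 ⟨?_, ?_⟩
      · simp only [hF, if_pos hadj]
        intro hh
        rcases Sym2.eq_iff.1 hh with ⟨h1, h2⟩ | ⟨h1, h2⟩
        · exact hne h1.symm
        · exact hwu h2
      · simp only [hF, if_pos hadj, mem_edgeFinset, mem_edgeSet, compl_adj]
        exact ⟨Ne.symm hwv, hnadj⟩
    · refine Finset.mem_erase.2 ⟨?_, ?_⟩
      · simp only [hF, if_neg hadj]
        intro hh
        rcases Sym2.eq_iff.1 hh with ⟨h1, h2⟩ | ⟨h1, h2⟩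
        · exact hwv h2
        · exact hne h1
      · simp only [hF, if_neg hadj, mem_edgeFinset, mem_edgeSet, compl_adj]
        exact ⟨Ne.symm hwu, hadj⟩
  have hinj : Set.InjOn F T := by
    intro w hw w' hw' hww
    have hwv : w ≠ v := Finset.ne_of_mem_erase hw
    have hwu : w ≠ u := Finset.ne_of_mem_erase (Finset.mem_of_mem_erase hw)
    have hwv' : w' ≠ v := Finset.ne_of_mem_erase hw'
    have hwu' : w' ≠ u := Finset.ne_of_mem_erase (Finset.mem_of_mem_erase hw')
    simp only [hF] at hww
    split_ifs at hww <;>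
    · rcases Sym2.eq_iff.1 hww with ⟨h1, h2⟩ | ⟨h1, h2⟩ <;> first
        | exact h2
        | (exact absurd h1 (by tauto)) | (exact absurd h2 (by tauto))
        | (exact absurd h1.symm (by tauto)) | (exact absurd h2.symm (by tauto))
  have hle := Finset.card_le_card_of_injOn F hmaps hinj
  have hTcard : T.card = Fintype.card V - 2 := by
    rw [hT, Finset.card_erase_of_mem (Finset.mem_erase.2 ⟨Ne.symm hne, Finset.mem_univ v⟩),
      Finset.card_erase_of_mem (Finset.mem_univ u), Finset.card_univ]
    omega
  have huvmem : s(u, v) ∈ Gᶜ.edgeFinset := by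
    simp only [mem_edgeFinset, mem_edgeSet, compl_adj]
    exact ⟨hne, huv⟩
  have herase : (Gᶜ.edgeFinset.erase s(u, v)).card = Gᶜ.edgeFinset.card - 1 :=
    Finset.card_erase_of_mem huvmem
  have hpos : 1 ≤ Gᶜ.edgeFinset.card := Finset.card_pos.2 ⟨_, huvmem⟩
  omega

/-- Every vertex has a walk to the root all of whose edges are parent edges. -/
private lemma walk_to_root {V : Type*} {G : SimpleGraph V} (r : V)
    (f : V → V) (hf : ∀ v, v ≠ r → G.Adj v (f v) ∧ G.dist (f v) r < G.dist v r) :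
    ∀ v, ∃ w : G.Walk v r, ∀ e ∈ w.edges, ∃ u, u ≠ r ∧ e = s(u, f u) := by
  suffices H : ∀ k v, G.dist v r ≤ k → ∃ w : G.Walk v r,
      ∀ e ∈ w.edges, ∃ u, u ≠ r ∧ e = s(u, f u) from fun v => H (G.dist v r) v le_rfl
  intro k
  induction k with
  | zero =>
    intro v hv
    have hvr : v = r := by
      by_contra hne
      have := (hf v hne).2
      omega
    subst hvr
    exact ⟨SimpleGraph.Walk.nil, by simp⟩
  | succ k ih =>
    intro v hv
    by_cases hvr : v = r
    · subst hvr; exact ⟨SimpleGraph.Walk.nil, by simp⟩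
    · obtain ⟨hadj, hlt⟩ := hf v hvr
      obtain ⟨w, hw⟩ := ih (f v) (by omega)
      refine ⟨SimpleGraph.Walk.cons hadj w, ?_⟩
      intro e he
      rw [SimpleGraph.Walk.edges_cons, List.mem_cons] at he
      rcases he with he | he
      · exact ⟨v, hvr, he⟩
      · exact hw e he

/-- A connected graph has a parent function decreasing distance to the root. -/
private lemma exists_parent {V : Type*} {G : SimpleGraph V} (hG : G.Connected) (r : V) :
    ∃ f : V → V, ∀ v, v ≠ r → G.Adj v (f v) ∧ G.dist (f v) r < G.dist v r := by
  have hstep : ∀ v : V, ∃ u, v ≠ r → G.Adj v u ∧ G.dist u r < G.dist v r := by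
    intro v
    by_cases hv : v = r
    · exact ⟨v, fun h => absurd hv h⟩
    · obtain ⟨p, hp⟩ := hG.exists_walk_length_eq_dist v r
      cases p with
      | nil => exact absurd rfl hv
      | cons h q =>
        refine ⟨_, fun _ => ⟨h, ?_⟩⟩
        have h1 := G.dist_le q
        rw [SimpleGraph.Walk.length_cons] at hp
        omega
  choose f hf using hstep
  exact ⟨f, hf⟩

/-- For `0 ≤ p ≤ C(n-1,2)`, every connected graph with `n` vertices and
`C(n,2) - p` edges satisfies `mc(G) ≥ C(n,2) - 2p`. -/
theorem stmt_1 {V : Type*} [Fintype V] (n p : ℕ) (hn : n = Fintype.card V)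
    (hp : p ≤ (n - 1).choose 2)
    (G : SimpleGraph V) (hG : G.Connected)
    (hm : (G.edgeSet.ncard : ℤ) = (n.choose 2 : ℤ) - p) :
    (n.choose 2 : ℤ) - 2 * p ≤ (mcNumber G : ℤ) := by
  classical
  have hnemp : Nonempty V := hG.nonempty
  set E := G.edgeSet with hE
  have hcount : E.ncard + Gᶜ.edgeSet.ncard = n.choose 2 := by
    have hdisj : Disjoint E Gᶜ.edgeSet := by
      rw [Set.disjoint_left]
      intro e he hec
      induction e using Sym2.ind with
      | _ a b =>
        rw [mem_edgeSet] at he hec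
        exact ((compl_adj G a b).1 hec).2 he
    have hunion : E ∪ Gᶜ.edgeSet = (⊤ : SimpleGraph V).edgeSet := by
      ext e
      induction e using Sym2.ind with
      | _ a b =>
        simp only [Set.mem_union, mem_edgeSet, compl_adj, top_adj, hE]
        constructor
        · rintro (h | h)
          exacts [h.ne, h.1]
        · intro h
          by_cases h2 : G.Adj a b
          exacts [Or.inl h2, Or.inr ⟨h, h2⟩]
    rw [← Set.ncard_union_eq hdisj (Set.toFinite _) (Set.toFinite _), hunion, hn,
      ← SimpleGraph.coe_edgeFinset, Set.ncard_coe_finset]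
    exact card_edgeFinset_top_eq_card_choose_two
  have key : ∀ k : ℕ, (∃ c : Sym2 V → ℕ, IsMCColoring G c ∧ k ≤ (c '' G.edgeSet).ncard) →
      k ≤ mcNumber G := by
    rintro k ⟨c, hc, hk⟩
    have hbdd : BddAbove {k | ∃ c : Sym2 V → ℕ, IsMCColoring G c ∧
        (c '' G.edgeSet).ncard = k} := by
      refine ⟨Fintype.card (Sym2 V), ?_⟩
      rintro x ⟨c', _, rfl⟩
      calc (c' '' G.edgeSet).ncard ≤ G.edgeSet.ncard := Set.ncard_image_le (Set.toFinite _)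
        _ ≤ (Set.univ : Set (Sym2 V)).ncard :=
            Set.ncard_le_ncard (Set.subset_univ _) (Set.toFinite _)
        _ = Fintype.card (Sym2 V) := by rw [Set.ncard_univ, Nat.card_eq_fintype_card]
    exact hk.trans (le_csSup hbdd ⟨c, hc, rfl⟩)
  suffices hsuf : ∃ c : Sym2 V → ℕ, IsMCColoring G c ∧ E.ncard ≤ (c '' E).ncard + p by
    obtain ⟨c, hc, hcard⟩ := hsuf
    have h1 := key _ ⟨c, hc, le_rfl⟩
    have h2 : ((c '' E).ncard : ℤ) ≤ (mcNumber G : ℤ) := by exact_mod_cast h1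
    omega
  have hEc : Gᶜ.edgeSet.ncard = p := by omega
  by_cases hcase : n ≤ p + 1
  · -- spanning-tree-like construction
    obtain ⟨r⟩ := hnemp
    obtain ⟨f, hf⟩ := exists_parent hG r
    set P : Finset (Sym2 V) := (Finset.univ.erase r).image (fun x => s(x, f x)) with hP
    set e0 : Sym2 V := s(r, r) with he0
    obtain ⟨c, hcS, hcard⟩ := merge_lemma E (P.image (fun e => (e0, e)))
    have hcol : ∀ e ∈ P, c e = c e0 := by
      intro e heP
      exact (hcS (e0, e) (Finset.mem_image_of_mem _ heP)).symm
    refine ⟨c, ?_, ?_⟩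
    · intro u v
      obtain ⟨wu, hwu⟩ := walk_to_root r f hf u
      obtain ⟨wv, hwv⟩ := walk_to_root r f hf v
      refine ⟨(wu.append wv.reverse).bypass, SimpleGraph.Walk.bypass_isPath _, c e0, ?_⟩
      intro e he
      have he2 := SimpleGraph.Walk.edges_bypass_subset _ he
      rw [SimpleGraph.Walk.edges_append, List.mem_append] at he2
      have hePform : ∃ x, x ≠ r ∧ e = s(x, f x) := by
        rcases he2 with h | h
        · exact hwu e h
        · rw [SimpleGraph.Walk.edges_reverse, List.mem_reverse] at h
          exact hwv e h
      obtain ⟨x, hx, hex⟩ := hePform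
      rw [hex]
      exact hcol _ (Finset.mem_image_of_mem _ (Finset.mem_erase.2 ⟨hx, Finset.mem_univ x⟩))
    · have h1 : (P.image (fun e => (e0, e))).card ≤ n - 1 := by
        calc (P.image (fun e => (e0, e))).card ≤ P.card := Finset.card_image_le
          _ ≤ (Finset.univ.erase r).card := Finset.card_image_le
          _ = n - 1 := by
              rw [Finset.card_erase_of_mem (Finset.mem_univ r), Finset.card_univ, hn]
      omega
  · -- common-neighbor construction
    push_neg at hcase
    have hcompl : Gᶜ.edgeFinset.card = p := by
      rw [← Set.ncard_coe_finset, SimpleGraph.coe_edgeFinset]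
      exact hEc
    have hcn : Gᶜ.edgeFinset.card + 2 ≤ Fintype.card V := by
      rw [hcompl, ← hn]
      omega
    have hsel : ∀ e : Sym2 V, ∃ pr : Sym2 V × Sym2 V,
        e ∈ Gᶜ.edgeSet → ∃ a b w, e = s(a, b) ∧ G.Adj a w ∧ G.Adj w b ∧
          pr = (s(a, w), s(w, b)) := by
      intro e
      induction e using Sym2.ind with
      | _ a b =>
        by_cases he : s(a, b) ∈ Gᶜ.edgeSet
        · rw [mem_edgeSet, compl_adj] at he
          obtain ⟨w, hw1, hw2⟩ := common_nbr he.1 he.2 hcn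
          exact ⟨(s(a, w), s(w, b)), fun _ => ⟨a, b, w, rfl, hw1, hw2, rfl⟩⟩
        · exact ⟨(s(a, b), s(a, b)), fun h => absurd h he⟩
    choose F hF using hsel
    obtain ⟨c, hcS, hcard⟩ := merge_lemma E (Gᶜ.edgeFinset.image F)
    refine ⟨c, ?_, ?_⟩
    · intro u v
      by_cases huv : u = v
      · subst huv
        exact ⟨SimpleGraph.Walk.nil, SimpleGraph.Walk.IsPath.nil, 0, by simp⟩
      by_cases hadj : G.Adj u v
      · refine ⟨(SimpleGraph.Walk.cons hadj SimpleGraph.Walk.nil).bypass,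
          SimpleGraph.Walk.bypass_isPath _, c s(u, v), ?_⟩
        intro e he
        have he2 := SimpleGraph.Walk.edges_bypass_subset _ he
        simp only [SimpleGraph.Walk.edges_cons, SimpleGraph.Walk.edges_nil,
          List.mem_singleton] at he2
        rw [he2]
      · have hmem : s(u, v) ∈ Gᶜ.edgeSet := by
          rw [mem_edgeSet, compl_adj]
          exact ⟨huv, hadj⟩
        obtain ⟨a, b, w, hab, haw, hwb, hpr⟩ := hF s(u, v) hmem
        have hSmem : F s(u, v) ∈ Gᶜ.edgeFinset.image F :=
          Finset.mem_image_of_mem F (mem_edgeFinset.2 hmem)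
        have hcc := hcS _ hSmem
        rw [hpr] at hcc
        rcases Sym2.eq_iff.1 hab with ⟨h1, h2⟩ | ⟨h1, h2⟩
        · subst h1; subst h2
          refine ⟨(SimpleGraph.Walk.cons haw (SimpleGraph.Walk.cons hwb
            SimpleGraph.Walk.nil)).bypass, SimpleGraph.Walk.bypass_isPath _, c s(u, w), ?_⟩
          intro e he
          have he2 := SimpleGraph.Walk.edges_bypass_subset _ he
          simp only [SimpleGraph.Walk.edges_cons, SimpleGraph.Walk.edges_nil,
            List.mem_cons, List.mem_singleton, List.not_mem_nil, or_false] at he2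
          rcases he2 with h | h
          · rw [h]
          · rw [h]
            exact hcc.symm
        · subst h1; subst h2
          refine ⟨(SimpleGraph.Walk.cons hwb.symm (SimpleGraph.Walk.cons haw.symm
            SimpleGraph.Walk.nil)).bypass, SimpleGraph.Walk.bypass_isPath _, c s(u, w), ?_⟩
          intro e he
          have he2 := SimpleGraph.Walk.edges_bypass_subset _ he
          simp only [SimpleGraph.Walk.edges_cons, SimpleGraph.Walk.edges_nil,
            List.mem_cons, List.mem_singleton, List.not_mem_nil, or_false] at he2
          rcases he2 with h | h
          · rw [h]
          · rw [h]
            have h3 : s(w, v) = s(v, w) := Sym2.eq_swap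
            have h4 : s(u, w) = s(w, u) := Sym2.eq_swap
            rw [h3, h4]
            exact hcc
    · have h1 : (Gᶜ.edgeFinset.image F).card ≤ p := le_trans Finset.card_image_le hcompl.le
      omega
end

section
/- Let n, p, k be integers with 0 ≤ p ≤ C(n,2)/2 and k = C(n,2) - 2p. Then every connected graph G on n vertices with at least C(n,2) - p edges satisfies mc(G) ≥ k; that is, f(n,k) ≤ C(n,2) - p. -/
set_option linter.unusedSectionVars false
set_option maxHeartbeats 1000000

open SimpleGraph

namespace MCaux

variable {V : Type*} [Fintype V]

/-- representative of the connected component of `v` in `H`. -/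
noncomputable def rp (H : SimpleGraph V) (v : V) : V := (H.connectedComponentMk v).out

lemma rp_reach (H : SimpleGraph V) (v : V) : H.Reachable v (rp H v) := by
  have h : H.connectedComponentMk (rp H v) = H.connectedComponentMk v :=
    (H.connectedComponentMk v).out_eq
  exact (SimpleGraph.ConnectedComponent.exact h).symm

lemma rp_eq_of_reachable {H : SimpleGraph V} {u v : V} (h : H.Reachable u v) :
    rp H u = rp H v := by
  unfold rp
  rw [SimpleGraph.ConnectedComponent.sound h]

lemma rp_rp (H : SimpleGraph V) (v : V) : rp H (rp H v) = rp H v :=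
  (rp_eq_of_reachable (rp_reach H v)).symm

lemma exists_adj_dist_lt (H : SimpleGraph V) {v r : V} (hr : H.Reachable v r) (hne : v ≠ r) :
    ∃ w, H.Adj v w ∧ H.dist w r < H.dist v r := by
  obtain ⟨p, hp⟩ := hr.exists_walk_length_eq_dist
  cases p with
  | nil => exact absurd rfl hne
  | cons hadj q =>
    refine ⟨_, hadj, ?_⟩
    have h1 := SimpleGraph.dist_le q
    have h2 : H.dist v r = q.length + 1 := by rw [← hp]; simp
    omega

lemma exists_parent (H : SimpleGraph V) {v : V} (h : rp H v ≠ v) :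
    ∃ w, H.Adj v w ∧ H.dist w (rp H v) < H.dist v (rp H v) :=
  exists_adj_dist_lt H (rp_reach H v) (fun e => h e.symm)

open Classical in
/-- parent of `v` : a neighbor strictly closer to the representative. -/
noncomputable def pr (H : SimpleGraph V) (v : V) : V :=
  if h : rp H v ≠ v then (exists_parent H h).choose else v

lemma pr_adj {H : SimpleGraph V} {v : V} (h : rp H v ≠ v) : H.Adj v (pr H v) := by
  rw [pr, dif_pos h]
  exact (exists_parent H h).choose_spec.1

lemma pr_dist {H : SimpleGraph V} {v : V} (h : rp H v ≠ v) :
    H.dist (pr H v) (rp H v) < H.dist v (rp H v) := by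
  rw [pr, dif_pos h]; exact (exists_parent H h).choose_spec.2

/-- vertices not fixed by `rp`. -/
def NF (H : SimpleGraph V) : Set V := {v | rp H v ≠ v}

lemma pr_injOn (H : SimpleGraph V) : Set.InjOn (fun v => s(v, pr H v)) (NF H) := by
  intro x hx y hy hxy
  simp only [Sym2.eq_iff] at hxy
  rcases hxy with ⟨h1, _⟩ | ⟨h1, h2⟩
  · exact h1
  · exfalso
    have hd1 := pr_dist hx
    have hd2 := pr_dist hy
    have hrxy : rp H x = rp H y := rp_eq_of_reachable (h2 ▸ (pr_adj hx)).reachable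
    rw [h2, hrxy] at hd1
    rw [← h1] at hd2
    omega

lemma ncard_NF_le (H : SimpleGraph V) : (NF H).ncard ≤ H.edgeSet.ncard := by
  classical
  rw [← Set.ncard_image_of_injOn (pr_injOn H)]
  refine Set.ncard_le_ncard ?_ (Set.toFinite _)
  rintro e ⟨v, hv, rfl⟩
  exact (pr_adj hv)

lemma exists_walk_pr (H : SimpleGraph V) (v : V) :
    ∃ w : H.Walk v (rp H v), ∀ e ∈ w.edges, e ∈ (fun u => s(u, pr H u)) '' (NF H) := by
  suffices hs : ∀ n (v : V), H.dist v (rp H v) = n →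
      ∃ w : H.Walk v (rp H v), ∀ e ∈ w.edges, e ∈ (fun u => s(u, pr H u)) '' (NF H) from
    hs _ v rfl
  intro n
  induction n using Nat.strong_induction_on with
  | _ n ih =>
    intro v hv
    by_cases hfix : rp H v = v
    · refine ⟨(SimpleGraph.Walk.nil : H.Walk v v).copy rfl hfix.symm, ?_⟩
      simp
    · have hadj := pr_adj hfix
      have hlt := pr_dist hfix
      have hrp_eq : rp H (pr H v) = rp H v := (rp_eq_of_reachable hadj.reachable).symm
      obtain ⟨w0, hw0⟩ := ih (H.dist (pr H v) (rp H (pr H v)))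
        (by rw [hrp_eq]; omega) (pr H v) rfl
      refine ⟨SimpleGraph.Walk.cons hadj (w0.copy rfl hrp_eq), ?_⟩
      intro e he
      rw [SimpleGraph.Walk.edges_cons, List.mem_cons] at he
      rcases he with rfl | he
      · exact ⟨v, hfix, rfl⟩
      · exact hw0 e (by rwa [SimpleGraph.Walk.edges_copy] at he)

lemma ncard_edgeSet_add_compl (G : SimpleGraph V) :
    G.edgeSet.ncard + Gᶜ.edgeSet.ncard = (Fintype.card V).choose 2 := by
  classical
  rw [← Set.ncard_union_eq ((SimpleGraph.disjoint_edgeSet).mpr disjoint_compl_right)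
    (Set.toFinite _) (Set.toFinite _)]
  rw [← SimpleGraph.edgeSet_sup, sup_compl_eq_top]
  rw [Set.ncard_eq_toFinset_card']
  have := SimpleGraph.card_edgeFinset_top_eq_card_choose_two (V := V)
  rw [SimpleGraph.edgeFinset] at this
  convert this using 2

/-- The spanning-tree based coloring. -/
lemma tree_case (G : SimpleGraph V) (hG : G.Connected) (h2 : 2 ≤ Fintype.card V) :
    ∃ c : Sym2 V → ℕ, IsMCColoring G c ∧
      (G.edgeSet.ncard : ℤ) - Fintype.card V + 2 ≤ ((c '' G.edgeSet).ncard : ℤ) := by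
  classical
  have hVne : Nonempty V := Fintype.card_pos_iff.mp (by omega)
  have hconst : ∀ u v : V, rp G u = rp G v := fun u v => rp_eq_of_reachable (hG.preconnected u v)
  set T : Set (Sym2 V) := (fun v => s(v, pr G v)) '' (NF G) with hT
  have hTE : T ⊆ G.edgeSet := by rintro e ⟨v, hv, rfl⟩; exact pr_adj hv
  have hTcard : T.ncard = (NF G).ncard := Set.ncard_image_of_injOn (pr_injOn G)
  obtain ⟨v0⟩ := hVne
  have hFsing : {v : V | rp G v = v} = {rp G v0} := by
    ext x
    simp only [Set.mem_setOf_eq, Set.mem_singleton_iff]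
    constructor
    · intro hx; rw [← hx]; exact hconst x v0
    · intro hx; rw [hx]; exact rp_rp G v0
  have hcompl : ({v : V | rp G v = v})ᶜ = NF G := by ext v; simp [NF]
  have hsum := Set.ncard_add_ncard_compl {v : V | rp G v = v}
  rw [hcompl, hFsing, Set.ncard_singleton, Nat.card_eq_fintype_card] at hsum
  -- hsum : 1 + (NF G).ncard = Fintype.card V
  set c : Sym2 V → ℕ := fun e => if e ∈ T then 0 else ((Fintype.equivFin (Sym2 V)) e : ℕ) + 1
    with hc
  have hc0 : ∀ e ∈ T, c e = 0 := by
    intro e he; simp only [hc]; rw [if_pos he]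
  refine ⟨c, ?_, ?_⟩
  · -- MC coloring
    intro x y
    obtain ⟨wx, hwx⟩ := exists_walk_pr G x
    obtain ⟨wy, hwy⟩ := exists_walk_pr G y
    set w : G.Walk x y := wx.append ((wy.copy rfl (hconst y x)).reverse) with hw
    refine ⟨w.toPath.val, w.toPath.property, 0, ?_⟩
    intro e he
    have he' : e ∈ w.edges := SimpleGraph.Walk.edges_toPath_subset w he
    apply hc0
    rw [hw] at he'
    simp only [SimpleGraph.Walk.edges_append, SimpleGraph.Walk.edges_reverse,
      SimpleGraph.Walk.edges_copy, List.mem_append, List.mem_reverse] at he'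
    rcases he' with h | h
    · exact hwx e h
    · exact hwy e h
  · -- counting
    have hTne : T.Nonempty := by
      rw [← Set.ncard_pos (Set.toFinite _), hTcard]
      omega
    have hEsplit : G.edgeSet = T ∪ (G.edgeSet \ T) := (Set.union_diff_cancel hTE).symm
    have himg : c '' G.edgeSet = insert 0 (c '' (G.edgeSet \ T)) := by
      conv_lhs => rw [hEsplit]
      rw [Set.image_union, ← Set.singleton_union]
      congr 1
      ext z
      simp only [Set.mem_image, Set.mem_singleton_iff]
      constructor
      · rintro ⟨e, he, rfl⟩
        exact (hc0 e he)
      · rintro rfl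
        obtain ⟨e, he⟩ := hTne
        exact ⟨e, he, hc0 e he⟩
    have h0 : (0 : ℕ) ∉ c '' (G.edgeSet \ T) := by
      rintro ⟨e, ⟨he1, he2⟩, hce⟩
      simp only [hc] at hce
      rw [if_neg he2] at hce
      omega
    have hinj : (c '' (G.edgeSet \ T)).ncard = (G.edgeSet \ T).ncard := by
      apply Set.ncard_image_of_injOn
      intro a ha b hb hab
      simp only [hc] at hab
      rw [if_neg ha.2, if_neg hb.2] at hab
      have : (Fintype.equivFin (Sym2 V)) a = (Fintype.equivFin (Sym2 V)) b :=
        Fin.val_injective (by omega)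
      exact (Fintype.equivFin (Sym2 V)).injective this
    have hdiff : (G.edgeSet \ T).ncard = G.edgeSet.ncard - T.ncard :=
      Set.ncard_diff hTE (Set.toFinite _)
    have hTle : T.ncard ≤ G.edgeSet.ncard := Set.ncard_le_ncard hTE (Set.toFinite _)
    have hcnt : (c '' G.edgeSet).ncard = 1 + (G.edgeSet \ T).ncard := by
      rw [himg, Set.ncard_insert_of_notMem h0 ((Set.toFinite _).image _)]
      omega
    rw [hcnt]
    omega

/-- The star-based coloring when the complement has at least three components. -/
lemma star_case (G : SimpleGraph V) (h3 : 3 ≤ {v : V | rp Gᶜ v = v}.ncard) :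
    ∃ c : Sym2 V → ℕ, IsMCColoring G c ∧
      (G.edgeSet.ncard : ℤ) - ((NF Gᶜ).ncard : ℤ) ≤ ((c '' G.edgeSet).ncard : ℤ) := by
  classical
  set H := Gᶜ with hH
  set F : Set V := {v : V | rp H v = v} with hF
  have h3' : 2 < F.toFinset.card := by
    rw [← Set.ncard_eq_toFinset_card']
    omega
  obtain ⟨a, b, d, ha, hb, hd, hab, had, hbd⟩ := Finset.two_lt_card_iff.mp h3'
  rw [Set.mem_toFinset] at ha hb hd
  set nxt : V → V := fun x => if x = a then b else if x = b then d else if x = d then a else a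
    with hnxt
  have ea : nxt a = b := by simp [hnxt]
  have eb : nxt b = d := by simp [hnxt, Ne.symm hab]
  have ed : nxt d = a := by simp [hnxt, Ne.symm had, Ne.symm hbd]
  have eo : ∀ x, x ≠ a → x ≠ b → x ≠ d → nxt x = a := by
    intro x h1 h2 h3
    simp [hnxt, h1, h2, h3]
  have hnxtF : ∀ x ∈ F, nxt x ∈ F := by
    intro x hx
    by_cases h1 : x = a
    · subst h1; rw [ea]; exact hb
    by_cases h2 : x = b
    · subst h2; rw [eb]; exact hd
    by_cases h3 : x = d
    · subst h3; rw [ed]; exact ha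
    · rw [eo x h1 h2 h3]; exact ha
  have hnxt_ne : ∀ x, nxt x ≠ x := by
    intro x
    by_cases h1 : x = a
    · subst h1; rw [ea]; exact Ne.symm hab
    by_cases h2 : x = b
    · subst h2; rw [eb]; exact Ne.symm hbd
    by_cases h3 : x = d
    · subst h3; rw [ed]; exact had
    · rw [eo x h1 h2 h3]; exact fun h => h1 h.symm
  have hnxt2 : ∀ x, nxt (nxt x) ≠ x := by
    intro x
    by_cases h1 : x = a
    · subst h1; rw [ea, eb]; exact Ne.symm had
    by_cases h2 : x = b
    · subst h2; rw [eb, ed]; exact hab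
    by_cases h3 : x = d
    · subst h3; rw [ed, ea]; exact hbd
    · rw [eo x h1 h2 h3, ea]; exact fun h => h2 h.symm
  set hub : V → V := fun u => nxt (rp H u) with hhub
  have hrpF : ∀ u, rp H u ∈ F := fun u => rp_rp H u
  have hub_fix : ∀ u, rp H (hub u) = hub u := fun u => hnxtF _ (hrpF u)
  have hub_ne : ∀ u, rp H (hub u) ≠ rp H u := by
    intro u
    rw [hub_fix u]
    exact hnxt_ne (rp H u)
  have hGadj : ∀ u, G.Adj u (hub u) := by
    intro u
    have h1 : u ≠ hub u := by
      intro h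
      exact hub_ne u (by rw [← h])
    have h2 : ¬H.Adj u (hub u) := by
      intro h
      exact hub_ne u (rp_eq_of_reachable h.reachable).symm
    by_contra hg
    exact h2 (by rw [hH]; exact (G.compl_adj u (hub u)).mpr ⟨h1, hg⟩)
  have key : ∀ u u', s(u, hub u) = s(u', hub u') → rp H u = rp H u' := by
    intro u u' h
    rw [Sym2.eq_iff] at h
    rcases h with ⟨rfl, _⟩ | ⟨h1, h2⟩
    · rfl
    · exfalso
      have hu : rp H u = u := by rw [h1]; exact hub_fix u'
      have hu' : rp H u' = u' := by rw [← h2]; exact hub_fix u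
      have e1 : nxt u = u' := by rw [← hu]; exact h2
      have e2 : nxt u' = u := by rw [← hu']; exact h1.symm
      exact hnxt2 u (by rw [e1, e2])
  set gV : V → ℕ := fun v => ((Fintype.equivFin V) v : ℕ) with hgV
  have hgVinj : Function.Injective gV := by
    intro x y hxy
    exact (Fintype.equivFin V).injective (Fin.val_injective hxy)
  set c : Sym2 V → ℕ := fun e =>
    if h : ∃ u, e = s(u, hub u) then 2 * gV (rp H h.choose)
    else 2 * ((Fintype.equivFin (Sym2 V)) e : ℕ) + 1 with hc
  have hc_star : ∀ u, c (s(u, hub u)) = 2 * gV (rp H u) := by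
    intro u
    have hex : ∃ u', s(u, hub u) = s(u', hub u') := ⟨u, rfl⟩
    simp only [hc]
    rw [dif_pos hex]
    rw [key hex.choose u hex.choose_spec.symm]
  have hMC : IsMCColoring G c := by
    intro x y
    by_cases hxy : x = y
    · subst hxy
      exact ⟨SimpleGraph.Walk.nil, SimpleGraph.Walk.IsPath.nil, 0, by simp⟩
    by_cases hadj : G.Adj x y
    · refine ⟨SimpleGraph.Walk.cons hadj SimpleGraph.Walk.nil, ?_, c s(x, y), ?_⟩
      · simp [SimpleGraph.Walk.isPath_def, hxy]
      · intro e he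
        simp only [SimpleGraph.Walk.edges_cons, SimpleGraph.Walk.edges_nil,
          List.mem_cons, List.not_mem_nil, or_false] at he
        rw [he]
    · have hHadj : H.Adj x y := by
        rw [hH]
        exact (G.compl_adj x y).mpr ⟨hxy, hadj⟩
      have hr : rp H x = rp H y := rp_eq_of_reachable hHadj.reachable
      have hhubeq : hub x = hub y := by simp only [hhub]; rw [hr]
      have h1 : G.Adj x (hub x) := hGadj x
      have h2 : G.Adj (hub x) y := by rw [hhubeq]; exact (hGadj y).symm
      have hxh : x ≠ hub x := h1.ne
      have hyh : hub x ≠ y := h2.ne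
      refine ⟨SimpleGraph.Walk.cons h1 (SimpleGraph.Walk.cons h2 SimpleGraph.Walk.nil), ?_,
        2 * gV (rp H x), ?_⟩
      · simp [SimpleGraph.Walk.isPath_def, hxy, hxh, hyh]
      · intro e he
        simp only [SimpleGraph.Walk.edges_cons, SimpleGraph.Walk.edges_nil,
          List.mem_cons, List.not_mem_nil, or_false] at he
        rcases he with rfl | rfl
        · exact hc_star x
        · have hswap : s(hub x, y) = s(y, hub y) := by rw [hhubeq, Sym2.eq_swap]
          rw [hswap, hc_star y, hr]
  refine ⟨c, hMC, ?_⟩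
  set SE : Set (Sym2 V) := Set.range (fun u => s(u, hub u)) with hSE
  have hSE_mem : ∀ e : Sym2 V, e ∈ SE ↔ ∃ u, e = s(u, hub u) := by
    intro e
    simp only [hSE, Set.mem_range]
    exact ⟨fun ⟨u, hu⟩ => ⟨u, hu.symm⟩, fun ⟨u, hu⟩ => ⟨u, hu.symm⟩⟩
  have hSE_sub : SE ⊆ G.edgeSet := by
    rintro e ⟨u, rfl⟩
    exact hGadj u
  have himg : c '' G.edgeSet = (c '' SE) ∪ (c '' (G.edgeSet \ SE)) := by
    rw [← Set.image_union, Set.union_diff_cancel hSE_sub]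
  have hdisj : Disjoint (c '' SE) (c '' (G.edgeSet \ SE)) := by
    rw [Set.disjoint_left]
    rintro z ⟨e, he, rfl⟩ ⟨e', he', hz⟩
    obtain ⟨u, rfl⟩ := he
    rw [hc_star u] at hz
    have hne : ¬ ∃ u', e' = s(u', hub u') := fun hx => he'.2 ((hSE_mem e').mpr hx)
    simp only [hc] at hz
    rw [dif_neg hne] at hz
    omega
  have hcSE : c '' SE = (fun v => 2 * gV v) '' F := by
    ext z
    constructor
    · rintro ⟨e, ⟨u, rfl⟩, rfl⟩
      exact ⟨rp H u, hrpF u, (hc_star u).symm⟩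
    · rintro ⟨v, hv, rfl⟩
      refine ⟨s(v, hub v), ⟨v, rfl⟩, ?_⟩
      have hv' : rp H v = v := hv
      rw [hc_star v, hv']
  have hcSEcard : (c '' SE).ncard = F.ncard := by
    rw [hcSE]
    apply Set.ncard_image_of_injOn
    intro x _ y _ hxy
    have hxy' : 2 * gV x = 2 * gV y := hxy
    exact hgVinj (by omega)
  have hcNEcard : (c '' (G.edgeSet \ SE)).ncard = (G.edgeSet \ SE).ncard := by
    apply Set.ncard_image_of_injOn
    intro x hx y hy hxy
    have hnx : ¬ ∃ u, x = s(u, hub u) := fun h => hx.2 ((hSE_mem x).mpr h)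
    have hny : ¬ ∃ u, y = s(u, hub u) := fun h => hy.2 ((hSE_mem y).mpr h)
    simp only [hc] at hxy
    rw [dif_neg hnx, dif_neg hny] at hxy
    have : (Fintype.equivFin (Sym2 V)) x = (Fintype.equivFin (Sym2 V)) y :=
      Fin.val_injective (by omega)
    exact (Fintype.equivFin (Sym2 V)).injective this
  have hunion : (c '' G.edgeSet).ncard = F.ncard + (G.edgeSet \ SE).ncard := by
    rw [himg, Set.ncard_union_eq hdisj ((Set.toFinite _).image _) ((Set.toFinite _).image _),
      hcSEcard, hcNEcard]
  have hSEcard_le : SE.ncard ≤ Fintype.card V := by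
    rw [hSE, ← Set.image_univ]
    calc ((fun u => s(u, hub u)) '' Set.univ).ncard ≤ (Set.univ : Set V).ncard :=
          Set.ncard_image_le (Set.toFinite _)
    _ = Fintype.card V := by rw [Set.ncard_univ, Nat.card_eq_fintype_card]
  have hdiff : (G.edgeSet \ SE).ncard = G.edgeSet.ncard - SE.ncard :=
    Set.ncard_diff hSE_sub (Set.toFinite _)
  have hSE_le_E : SE.ncard ≤ G.edgeSet.ncard := Set.ncard_le_ncard hSE_sub (Set.toFinite _)
  have hcompl : Fᶜ = NF H := by ext v; simp [hF, NF]
  have hsum := Set.ncard_add_ncard_compl F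
  rw [hcompl, Nat.card_eq_fintype_card] at hsum
  rw [hunion]
  omega

end MCaux

open MCaux in
/-- For `0 ≤ p ≤ C(n,2)/2` and `k = C(n,2) - 2p`, every connected graph on `n`
vertices with at least `C(n,2) - p` edges satisfies `mc(G) ≥ k`,
i.e. `f(n,k) ≤ C(n,2) - p`. -/
theorem stmt_2 {V : Type*} [Fintype V] (n p k : ℕ) (hn : n = Fintype.card V)
    (hp : 2 * p ≤ n.choose 2) (hk : (k : ℤ) = (n.choose 2 : ℤ) - 2 * p)
    (G : SimpleGraph V) (hG : G.Connected)
    (hm : (n.choose 2 : ℤ) - p ≤ (G.edgeSet.ncard : ℤ)) :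
    k ≤ mcNumber G := by
  classical
  by_cases hk0 : k = 0
  · rw [hk0]; exact Nat.zero_le _
  have hc2 : 1 ≤ n.choose 2 := by omega
  have hn2 : 2 ≤ Fintype.card V := by
    rw [← hn]
    by_contra hlt
    rw [Nat.choose_eq_zero_of_lt (by omega)] at hc2
    omega
  have hmq := ncard_edgeSet_add_compl G
  rw [← hn] at hmq
  have hqb : (NF Gᶜ).ncard ≤ Gᶜ.edgeSet.ncard := ncard_NF_le Gᶜ
  obtain ⟨c, hc, hcard⟩ : ∃ c : Sym2 V → ℕ, IsMCColoring G c ∧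
      (G.edgeSet.ncard : ℤ) - (Gᶜ.edgeSet.ncard : ℤ) ≤ ((c '' G.edgeSet).ncard : ℤ) := by
    by_cases h3 : 3 ≤ {v : V | rp Gᶜ v = v}.ncard
    · obtain ⟨c, hmc, hb⟩ := star_case G h3
      refine ⟨c, hmc, le_trans ?_ hb⟩
      omega
    · obtain ⟨c, hmc, hb⟩ := tree_case G hG hn2
      refine ⟨c, hmc, le_trans ?_ hb⟩
      have hcompl : ({v : V | rp Gᶜ v = v})ᶜ = NF Gᶜ := by ext v; simp [NF]
      have hsum := Set.ncard_add_ncard_compl {v : V | rp Gᶜ v = v}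
      rw [hcompl, Nat.card_eq_fintype_card] at hsum
      omega
  have hkle : (k : ℤ) ≤ ((c '' G.edgeSet).ncard : ℤ) := by
    refine le_trans ?_ hcard
    omega
  have hkle' : k ≤ (c '' G.edgeSet).ncard := by exact_mod_cast hkle
  refine le_trans hkle' (le_csSup ⟨G.edgeSet.ncard, ?_⟩ ⟨c, hc, rfl⟩)
  rintro x ⟨c', -, rfl⟩
  exact Set.ncard_image_le (Set.toFinite _)
end

section
/- Let G be a connected graph and let f be an extremal MC-coloring of G (an MC-coloring using exactly mc(G) colors). If the set of edges of G receiving some fixed color i induces a tree T with at least two edges, then T contains at least one pair of vertices that are nonadjacent in G. -/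
/-- In an extremal MC-coloring, every color class inducing a tree with at least
two edges contains a pair of vertices nonadjacent in `G`. -/
theorem stmt_3 {V : Type*} [Fintype V] (G : SimpleGraph V) (hG : G.Connected)
    (c : Sym2 V → ℕ) (hc : IsMCColoring G c)
    (hext : (c '' G.edgeSet).ncard = mcNumber G)
    (i : ℕ) (T : G.Subgraph)
    (hTedges : T.edgeSet = {e | e ∈ G.edgeSet ∧ c e = i})
    (hTree : T.coe.IsTree) (hT2 : 2 ≤ T.edgeSet.ncard) :
    ∃ u v : V, u ∈ T.verts ∧ v ∈ T.verts ∧ u ≠ v ∧ ¬ G.Adj u v := by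
  classical
  by_contra hcon
  push_neg at hcon
  -- `T.verts` is a clique in `G`
  have hclique : ∀ u v : V, u ∈ T.verts → v ∈ T.verts → u ≠ v → G.Adj u v := by
    intro u v hu hv huv
    by_contra h
    exact h (hcon u v hu hv huv)
  have hGfin : G.edgeSet.Finite := Set.toFinite _
  have hTfin : T.edgeSet.Finite := hGfin.subset T.edgeSet_subset
  -- two distinct edges of `T`
  obtain ⟨e1, he1, e2, he2, hne⟩ := (Set.one_lt_ncard hTfin).mp (by omega)
  -- a fresh color
  obtain ⟨f, hf⟩ := ((hGfin.image c).insert i).exists_notMem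
  have hfi : f ≠ i := by intro h; exact hf (by rw [h]; exact Set.mem_insert i _)
  have hfim : f ∉ c '' G.edgeSet := fun h => hf (Set.mem_insert_of_mem _ h)
  set c' : Sym2 V → ℕ := fun x => if x = e1 then f else c x with hc'def
  have he1G : e1 ∈ G.edgeSet := T.edgeSet_subset he1
  have he1i : c e1 = i := by
    have := hTedges ▸ he1; exact this.2
  have he2G : e2 ∈ G.edgeSet := T.edgeSet_subset he2
  have he2i : c e2 = i := by
    have := hTedges ▸ he2; exact this.2
  -- endpoints of an all-`i` walk lie in `T.verts`
  have hstart : ∀ (u v : V) (p : G.Walk u v), p.edges ≠ [] →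
      (∀ e ∈ p.edges, c e = i) → u ∈ T.verts := by
    intro u v p hne hmono
    cases p with
    | nil => simp at hne
    | @cons _ w _ h q =>
      have hmem : s(u, w) ∈ (SimpleGraph.Walk.cons h q).edges := by
        simp [SimpleGraph.Walk.edges_cons]
      have hci : c s(u, w) = i := hmono _ hmem
      have : s(u, w) ∈ T.edgeSet := by
        rw [hTedges]; exact ⟨h, hci⟩
      exact (SimpleGraph.Subgraph.mem_edgeSet.mp this).fst_mem
  -- c' is an MC-coloring
  have hc' : IsMCColoring G c' := by
    intro u v
    obtain ⟨p, hp, k, hk⟩ := hc u v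
    by_cases hmem : e1 ∈ p.edges
    · -- all edges of p are colored i
      have hki : k = i := by rw [← hk e1 hmem, he1i]
      have hall : ∀ e ∈ p.edges, c e = i := fun e he => hki ▸ hk e he
      by_cases huv : u = v
      · subst huv
        exact ⟨SimpleGraph.Walk.nil, SimpleGraph.Walk.IsPath.nil, 0, by simp⟩
      · have hpe : p.edges ≠ [] := by
          intro h; rw [h] at hmem; simp at hmem
        have hu : u ∈ T.verts := hstart u v p hpe hall
        have hv : v ∈ T.verts := by
          apply hstart v u p.reverse
          · simpa [SimpleGraph.Walk.edges_reverse] using hpe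
          · intro e he
            exact hall e (by simpa [SimpleGraph.Walk.edges_reverse] using he)
        have hadj : G.Adj u v := hclique u v hu hv huv
        refine ⟨SimpleGraph.Walk.cons hadj SimpleGraph.Walk.nil, ?_, c' s(u, v), ?_⟩
        · simp [SimpleGraph.Walk.isPath_def, huv]
        · intro e he
          simp only [SimpleGraph.Walk.edges_cons, SimpleGraph.Walk.edges_nil,
            List.mem_singleton] at he
          rw [he]
    · refine ⟨p, hp, k, fun e he => ?_⟩
      have : e ≠ e1 := fun h => hmem (h ▸ he)
      simp only [hc'def, if_neg this]
      exact hk e he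
  -- c' uses strictly more colors
  have hsub : insert f (c '' G.edgeSet) ⊆ c' '' G.edgeSet := by
    intro k hk
    rcases Set.mem_insert_iff.mp hk with hk | ⟨e0, he0, hk⟩
    · exact ⟨e1, he1G, by simp [hc'def, hk]⟩
    · by_cases h : e0 = e1
      · refine ⟨e2, he2G, ?_⟩
        have : c e0 = i := h ▸ he1i
        simp only [hc'def, if_neg (Ne.symm hne), he2i]
        rw [← hk, this]
      · exact ⟨e0, he0, by simp only [hc'def, if_neg h]; exact hk⟩
  have hc'fin : (c' '' G.edgeSet).Finite := hGfin.image c'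
  have hcount : (c '' G.edgeSet).ncard + 1 ≤ (c' '' G.edgeSet).ncard := by
    have h1 : (insert f (c '' G.edgeSet)).ncard = (c '' G.edgeSet).ncard + 1 :=
      Set.ncard_insert_of_notMem hfim (hGfin.image c)
    calc (c '' G.edgeSet).ncard + 1 = (insert f (c '' G.edgeSet)).ncard := h1.symm
      _ ≤ (c' '' G.edgeSet).ncard := Set.ncard_le_ncard hsub hc'fin
  -- contradiction with maximality
  have hbdd : BddAbove {k | ∃ c : Sym2 V → ℕ, IsMCColoring G c ∧ (c '' G.edgeSet).ncard = k} := by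
    refine ⟨G.edgeSet.ncard, ?_⟩
    rintro k ⟨c0, _, rfl⟩
    exact Set.ncard_image_le hGfin
  have hle : (c' '' G.edgeSet).ncard ≤ mcNumber G :=
    le_csSup hbdd ⟨c', hc', rfl⟩
  omega
end

section
/- Let n and t be integers with 3 ≤ t ≤ n, and let G_n^t be the graph obtained from the complete graph K_n as follows: partition the vertex set into t classes V_1, ..., V_t whose sizes pairwise differ by at most 1, choose a vertex v_j* in each V_j, and delete all edges joining v_j* to the other vertices of V_j. Then mc(G_n^t) = C(n,2) - 2n + 2t. -/
open Finset


lemma walk_start_mem_edge {V : Type*} {G : SimpleGraph V} {u v : V} (p : G.Walk u v)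
    (h : u ≠ v) : ∃ e ∈ p.edges, u ∈ e := by
  cases p with
  | nil => exact absurd rfl h
  | @cons _ w _ h' q =>
    exact ⟨s(u, w), by simp, Sym2.mem_mk_left _ _⟩

lemma core_count {V : Type*} [Fintype V] {t : ℕ} (G : SimpleGraph V)
    (P : V → Fin t) (star : Fin t → V) (hstar : ∀ j, P (star j) = j)
    (hAdj : ∀ u v : V, G.Adj u v ↔
      u ≠ v ∧ ¬ (P u = P v ∧ (u = star (P u) ∨ v = star (P v))))
    (U : Finset (Sym2 V)) (hUE : ∀ e ∈ U, e ∈ G.edgeSet)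
    (T : Finset V) (hT : T.Nonempty) (hTS : ∀ v ∈ T, v ≠ star (P v))
    (hreach : ∀ v ∈ T, (SimpleGraph.fromEdgeSet (↑U : Set (Sym2 V))).Reachable (star (P v)) v) :
    T.card + 1 ≤ U.card := by
  classical
  obtain ⟨v₀, hv₀⟩ := hT
  set H : SimpleGraph V := SimpleGraph.fromEdgeSet (↑U : Set (Sym2 V)) with hHdef
  have hHadj : ∀ x y : V, H.Adj x y ↔ s(x, y) ∈ U ∧ x ≠ y := by
    intro x y
    rw [hHdef, SimpleGraph.fromEdgeSet_adj]
    simp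
  have hHedge : ∀ e, e ∈ H.edgeSet ↔ e ∈ U := by
    intro e
    rw [hHdef, SimpleGraph.edgeSet_fromEdgeSet]
    constructor
    · rintro ⟨h1, _⟩; exact h1
    · intro h1
      exact ⟨h1, SimpleGraph.not_isDiag_of_mem_edgeSet G (hUE e h1)⟩
  set W : Finset V := univ.filter (fun x => ∃ e ∈ U, x ∈ e) with hWdef
  have hmemW : ∀ x : V, x ∈ W ↔ ∃ e ∈ U, x ∈ e := by
    intro x; simp [hWdef]
  set comp : V → H.ConnectedComponent := fun x => H.connectedComponentMk x with hcompdef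
  have hcompadj : ∀ {x y : V}, H.Adj x y → comp x = comp y :=
    fun h => SimpleGraph.ConnectedComponent.sound h.reachable
  -- members of T and their stars lie in W
  have hWT : ∀ v ∈ T, v ∈ W ∧ star (P v) ∈ W := by
    intro v hv
    obtain ⟨p⟩ := hreach v hv
    have hne : star (P v) ≠ v := fun h => hTS v hv h.symm
    obtain ⟨e, he, hse⟩ := walk_start_mem_edge p hne
    obtain ⟨e', he', hve⟩ := walk_start_mem_edge p.reverse (Ne.symm hne)
    have hU : e ∈ U := (hHedge e).mp (p.edges_subset_edgeSet he)
    have hU' : e' ∈ U := by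
      rw [SimpleGraph.Walk.edges_reverse, List.mem_reverse] at he'
      exact (hHedge e').mp (p.edges_subset_edgeSet he')
    exact ⟨(hmemW v).mpr ⟨e', hU', hve⟩, (hmemW _).mpr ⟨e, hU, hse⟩⟩
  -- roots
  set rt : H.ConnectedComponent → V := fun C =>
    if h : ∃ x, x ∈ W ∧ comp x = C then h.choose else v₀ with hrtdef
  have hrt : ∀ x ∈ W, rt (comp x) ∈ W ∧ comp (rt (comp x)) = comp x := by
    intro x hx
    have h : ∃ y, y ∈ W ∧ comp y = comp x := ⟨x, hx, rfl⟩
    rw [hrtdef]; simp only [dif_pos h]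
    exact h.choose_spec
  -- descent towards root
  have hdesc : ∀ x ∈ W, x ≠ rt (comp x) →
      ∃ y, H.Adj x y ∧ H.dist y (rt (comp x)) < H.dist x (rt (comp x)) := by
    intro x hx hne
    have hre : H.Reachable x (rt (comp x)) :=
      SimpleGraph.ConnectedComponent.exact (hrt x hx).2.symm
    obtain ⟨p, hp⟩ := hre.exists_walk_length_eq_dist
    obtain ⟨y, h, q, rfl⟩ := SimpleGraph.Walk.exists_eq_cons_of_ne hne p
    refine ⟨y, h, ?_⟩
    have h1 : H.dist y (rt (comp x)) ≤ q.length := SimpleGraph.dist_le q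
    simp only [SimpleGraph.Walk.length_cons] at hp
    omega
  set yf : V → V := fun x =>
    if h : ∃ y, H.Adj x y ∧ H.dist y (rt (comp x)) < H.dist x (rt (comp x))
    then h.choose else x with hyfdef
  have hyf : ∀ x ∈ W, x ≠ rt (comp x) →
      H.Adj x (yf x) ∧ H.dist (yf x) (rt (comp x)) < H.dist x (rt (comp x)) := by
    intro x hx hne
    have h := hdesc x hx hne
    rw [hyfdef]; simp only [dif_pos h]
    exact h.choose_spec
  set W' : Finset V := W.filter (fun x => x ≠ rt (comp x)) with hW'def
  have h1 : W'.card ≤ U.card := by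
    apply Finset.card_le_card_of_injOn (fun x => s(x, yf x))
    · intro x hx
      rw [hW'def, Finset.mem_coe, Finset.mem_filter] at hx
      exact ((hHadj _ _).mp (hyf x hx.1 hx.2).1).1
    · intro x1 hx1 x2 hx2 heq
      simp only [hW'def, Finset.coe_filter, Set.mem_setOf_eq, Finset.mem_filter] at hx1 hx2
      rcases Sym2.eq_iff.mp heq with ⟨h, _⟩ | ⟨ha, hb⟩
      · exact h
      · exfalso
        have hA1 := hyf x1 hx1.1 hx1.2
        have hA2 := hyf x2 hx2.1 hx2.2
        have hcc : comp x1 = comp x2 := hcompadj (hb ▸ hA1.1)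
        have d1 := hA1.2
        have d2 := hA2.2
        rw [hb] at d1
        rw [← ha] at d2
        rw [hcc] at d1
        omega
  set D : Finset H.ConnectedComponent := W.image comp with hDdef
  have h2 : W.card ≤ W'.card + D.card := by
    have hsplit : W'.card + (W.filter (fun x => ¬(x ≠ rt (comp x)))).card = W.card :=
      Finset.card_filter_add_card_filter_not _
    have hle : (W.filter (fun x => ¬(x ≠ rt (comp x)))).card ≤ D.card := by
      apply Finset.card_le_card_of_injOn comp
      · intro x hx
        rw [Finset.mem_coe, Finset.mem_filter] at hx
        exact Finset.mem_image_of_mem comp hx.1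
      · intro x1 hx1 x2 hx2 heq
        simp only [Finset.coe_filter, Set.mem_setOf_eq, not_not] at hx1 hx2
        rw [hx1.2, hx2.2, heq]
    omega
  set N : Finset V := W.filter (fun x => x ∉ T) with hNdef
  have hTW : ∀ v ∈ T, v ∈ W := fun v hv => (hWT v hv).1
  have h3 : W.card = T.card + N.card := by
    have hsplit := Finset.card_filter_add_card_filter_not
      (s := W) (p := fun x => x ∈ T)
    have hfT : W.filter (fun x => x ∈ T) = T := by
      ext x
      simp only [Finset.mem_filter]
      exact ⟨fun h => h.2, fun h => ⟨hTW x h, h⟩⟩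
    rw [hfT] at hsplit
    rw [hNdef]
    omega
  have hstarT : ∀ j, star j ∉ T := by
    intro j hj
    exact hTS _ hj (by rw [hstar])
  have hcompstar : ∀ v ∈ T, comp (star (P v)) = comp v :=
    fun v hv => SimpleGraph.ConnectedComponent.sound (hreach v hv)
  have hsec : ∀ C ∈ D, ∃ z, z ∈ N ∧ comp z = C := by
    intro C hC
    rw [hDdef, Finset.mem_image] at hC
    obtain ⟨x, hxW, rfl⟩ := hC
    by_cases hxT : x ∈ T
    · refine ⟨star (P x), ?_, hcompstar x hxT⟩
      rw [hNdef, Finset.mem_filter]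
      exact ⟨(hWT x hxT).2, hstarT _⟩
    · refine ⟨x, ?_, rfl⟩
      rw [hNdef, Finset.mem_filter]
      exact ⟨hxW, hxT⟩
  set ns : H.ConnectedComponent → V := fun C =>
    if h : ∃ z, z ∈ N ∧ comp z = C then h.choose else v₀ with hnsdef
  have hns : ∀ C ∈ D, ns C ∈ N ∧ comp (ns C) = C := by
    intro C hC
    have h := hsec C hC
    rw [hnsdef]; simp only [dif_pos h]
    exact h.choose_spec
  set C₀ := comp v₀ with hC₀def
  have hs₀N : star (P v₀) ∈ N ∧ comp (star (P v₀)) = C₀ := by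
    constructor
    · rw [hNdef, Finset.mem_filter]
      exact ⟨(hWT v₀ hv₀).2, hstarT _⟩
    · exact hcompstar v₀ hv₀
  have hsecond : ∃ z, z ∈ N ∧ comp z = C₀ ∧ z ≠ star (P v₀) := by
    by_contra hcon
    push_neg at hcon
    have hs₀W : star (P v₀) ∈ W := (hWT v₀ hv₀).2
    obtain ⟨e, heU, hse⟩ := (hmemW _).mp hs₀W
    obtain ⟨w, rfl⟩ := Sym2.mem_iff_exists.mp hse
    have hGadj : G.Adj (star (P v₀)) w := (SimpleGraph.mem_edgeSet G).mp (hUE _ heU)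
    have hnew : star (P v₀) ≠ w := hGadj.ne
    have hHaw : H.Adj (star (P v₀)) w := (hHadj _ _).mpr ⟨heU, hnew⟩
    have hwW : w ∈ W := (hmemW w).mpr ⟨_, heU, Sym2.mem_mk_right _ _⟩
    have hwC : comp w = C₀ := by rw [← hcompadj hHaw]; exact hs₀N.2
    by_cases hwT : w ∈ T
    · by_cases hP : P w = P v₀
      · have hh := (hAdj (star (P v₀)) w).mp hGadj
        exact hh.2 ⟨by rw [hstar, hP], Or.inl (by rw [hstar])⟩
      · have hzN : star (P w) ∈ N := by
          rw [hNdef, Finset.mem_filter]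
          exact ⟨(hWT w hwT).2, hstarT _⟩
        have hzC : comp (star (P w)) = C₀ := by rw [hcompstar w hwT]; exact hwC
        have heq := hcon (star (P w)) hzN hzC
        exact hP (by rw [← hstar (P w), heq, hstar])
    · have hwN : w ∈ N := by
        rw [hNdef, Finset.mem_filter]
        exact ⟨hwW, hwT⟩
      exact hnew (hcon w hwN hwC).symm
  obtain ⟨z, hzN, hzC, hzs⟩ := hsecond
  have hC₀D : C₀ ∈ D := Finset.mem_image_of_mem comp (hTW v₀ hv₀)
  have h4 : D.card + 1 ≤ N.card := by
    set x := if ns C₀ = star (P v₀) then z else star (P v₀) with hxdef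
    have hxN : x ∈ N := by
      rw [hxdef]; split
      · exact hzN
      · exact hs₀N.1
    have hxC : comp x = C₀ := by
      rw [hxdef]; split
      · exact hzC
      · exact hs₀N.2
    have hxns : x ∉ D.image ns := by
      intro hmem
      obtain ⟨C, hCD, hCx⟩ := Finset.mem_image.mp hmem
      have hCC₀ : C = C₀ := by rw [← (hns C hCD).2, hCx, hxC]
      rw [hCC₀] at hCx
      by_cases h : ns C₀ = star (P v₀)
      · rw [hxdef, if_pos h] at hCx
        rw [hCx] at h
        exact hzs h
      · rw [hxdef, if_neg h] at hCx
        exact h hCx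
    have hsub : insert x (D.image ns) ⊆ N := by
      intro a ha
      rcases Finset.mem_insert.mp ha with rfl | ha
      · exact hxN
      · obtain ⟨C, hC, rfl⟩ := Finset.mem_image.mp ha
        exact (hns C hC).1
    have hcardins : (insert x (D.image ns)).card = (D.image ns).card + 1 :=
      Finset.card_insert_of_notMem hxns
    have himg : (D.image ns).card = D.card := Finset.card_image_of_injOn
      (fun C1 h1 C2 h2 he => by rw [← (hns C1 h1).2, ← (hns C2 h2).2, he])
    have hle := Finset.card_le_card hsub
    omega
  omega

open scoped Classical in
lemma upper_bound {V : Type*} [Fintype V] {t : ℕ} (G : SimpleGraph V)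
    (P : V → Fin t) (star : Fin t → V) (hstar : ∀ j, P (star j) = j)
    (hAdj : ∀ u v : V, G.Adj u v ↔
      u ≠ v ∧ ¬ (P u = P v ∧ (u = star (P u) ∨ v = star (P v))))
    (c : Sym2 V → ℕ) (hc : IsMCColoring G c) :
    (G.edgeFinset.image c).card + (univ.filter (fun v : V => v ≠ star (P v))).card
      ≤ G.edgeFinset.card := by
  set S := univ.filter (fun v : V => v ≠ star (P v)) with hSdef
  have hexists : ∀ v : V, ∃ pk : G.Walk (star (P v)) v × ℕ,
      pk.1.IsPath ∧ ∀ e ∈ pk.1.edges, c e = pk.2 := by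
    intro v
    obtain ⟨p, hp, k, hk⟩ := hc (star (P v)) v
    exact ⟨⟨p, k⟩, hp, hk⟩
  set pw : (v : V) → G.Walk (star (P v)) v := fun v => (hexists v).choose.1 with hpwdef
  set f : V → ℕ := fun v => (hexists v).choose.2 with hfdef
  have hpk : ∀ v, ∀ e ∈ (pw v).edges, c e = f v := fun v => ((hexists v).choose_spec).2
  have hSne : ∀ v ∈ S, star (P v) ≠ v := by
    intro v hv
    rw [hSdef, Finset.mem_filter] at hv
    exact fun h => hv.2 h.symm
  have hfK : ∀ v ∈ S, f v ∈ G.edgeFinset.image c := by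
    intro v hv
    obtain ⟨e, he, _⟩ := walk_start_mem_edge (pw v) (hSne v hv)
    exact Finset.mem_image.mpr
      ⟨e, SimpleGraph.mem_edgeFinset.mpr ((pw v).edges_subset_edgeSet he), hpk v e he⟩
  set K := G.edgeFinset.image c with hKdef
  have hS : S.card = ∑ k ∈ K, (S.filter (fun v => f v = k)).card :=
    Finset.card_eq_sum_card_fiberwise hfK
  have hE : G.edgeFinset.card = ∑ k ∈ K, (G.edgeFinset.filter (fun e => c e = k)).card :=
    Finset.card_eq_sum_card_fiberwise (fun e he => Finset.mem_image_of_mem c he)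
  have key : ∀ k ∈ K, (S.filter (fun v => f v = k)).card + 1
      ≤ (G.edgeFinset.filter (fun e => c e = k)).card := by
    intro k hk
    rcases Finset.eq_empty_or_nonempty (S.filter (fun v => f v = k)) with hemp | hne
    · rw [hemp]
      obtain ⟨e, he, hce⟩ := Finset.mem_image.mp hk
      have hmem : e ∈ G.edgeFinset.filter (fun e => c e = k) :=
        Finset.mem_filter.mpr ⟨he, hce⟩
      simpa using Finset.card_pos.mpr ⟨e, hmem⟩
    · set T := S.filter (fun v => f v = k) with hTdef
      set U : Finset (Sym2 V) := T.biUnion (fun v => (pw v).edges.toFinset) with hUdef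
      have hUk : U ⊆ G.edgeFinset.filter (fun e => c e = k) := by
        intro e he
        obtain ⟨v, hvT, hev⟩ := Finset.mem_biUnion.mp he
        rw [List.mem_toFinset] at hev
        refine Finset.mem_filter.mpr
          ⟨SimpleGraph.mem_edgeFinset.mpr ((pw v).edges_subset_edgeSet hev), ?_⟩
        rw [hpk v e hev]
        exact (Finset.mem_filter.mp hvT).2
      have hUE : ∀ e ∈ U, e ∈ G.edgeSet := by
        intro e he
        exact SimpleGraph.mem_edgeFinset.mp (Finset.mem_filter.mp (hUk he)).1
      have hTS : ∀ v ∈ T, v ≠ star (P v) := by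
        intro v hv
        have hvS : v ∈ S := (Finset.mem_filter.mp hv).1
        rw [hSdef, Finset.mem_filter] at hvS
        exact hvS.2
      have hreach : ∀ v ∈ T,
          (SimpleGraph.fromEdgeSet (↑U : Set (Sym2 V))).Reachable (star (P v)) v := by
        intro v hv
        refine ⟨(pw v).transfer _ ?_⟩
        intro e he
        rw [SimpleGraph.edgeSet_fromEdgeSet]
        constructor
        · exact Finset.mem_coe.mpr (Finset.mem_biUnion.mpr ⟨v, hv, List.mem_toFinset.mpr he⟩)
        · exact SimpleGraph.not_isDiag_of_mem_edgeSet G ((pw v).edges_subset_edgeSet he)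
      have hcore := core_count G P star hstar hAdj U hUE T hne hTS hreach
      exact le_trans hcore (Finset.card_le_card hUk)
  have hsum := Finset.sum_le_sum key
  rw [Finset.sum_add_distrib, Finset.sum_const, smul_eq_mul, mul_one] at hsum
  rw [hS, hE]
  omega

open scoped Classical in
lemma lower_bound_s4 {V : Type*} [Fintype V] {t : ℕ} (ht : 3 ≤ t) (G : SimpleGraph V)
    (P : V → Fin t) (star : Fin t → V) (hstar : ∀ j, P (star j) = j)
    (hAdj : ∀ u v : V, G.Adj u v ↔
      u ≠ v ∧ ¬ (P u = P v ∧ (u = star (P u) ∨ v = star (P v)))) :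
    ∃ c : Sym2 V → ℕ, IsMCColoring G c ∧
      (G.edgeFinset.image c).card + Fintype.card V = G.edgeFinset.card + t := by
  have ht0 : 0 < t := by omega
  set nxt : Fin t → Fin t := fun j => ⟨(j.val + 1) % t, Nat.mod_lt _ ht0⟩ with hnxtdef
  have hmod : ∀ m : ℕ, m < t → (m + 1) % t = if m + 1 = t then 0 else m + 1 := by
    intro m hm
    split
    · next h => rw [h, Nat.mod_self]
    · next h => exact Nat.mod_eq_of_lt (by omega)
  have hnxt1 : ∀ j : Fin t, nxt j ≠ j := by
    intro j h
    have hval := congrArg Fin.val h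
    simp only [hnxtdef] at hval
    rw [hmod j.val j.isLt] at hval
    have := j.isLt
    split at hval <;> omega
  have hnxt2 : ∀ j : Fin t, nxt (nxt j) ≠ j := by
    intro j h
    have hval := congrArg Fin.val h
    simp only [hnxtdef] at hval
    rw [hmod j.val j.isLt] at hval
    have hj := j.isLt
    split at hval
    · next h1 =>
      rw [hmod 0 (by omega)] at hval
      split at hval <;> omega
    · next h1 =>
      rw [hmod (j.val + 1) (by omega)] at hval
      split at hval <;> omega
  set φ : V → Sym2 V := fun w => s(star (nxt (P w)), w) with hφdef
  have hφadj : ∀ w, G.Adj (star (nxt (P w))) w := by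
    intro w
    rw [hAdj]
    constructor
    · intro h
      have := congrArg P h
      rw [hstar] at this
      exact hnxt1 (P w) this
    · rintro ⟨h1, -⟩
      rw [hstar] at h1
      exact hnxt1 (P w) h1
  have hφE : ∀ w, φ w ∈ G.edgeFinset := fun w =>
    SimpleGraph.mem_edgeFinset.mpr ((SimpleGraph.mem_edgeSet G).mpr (hφadj w))
  have hφinj : Function.Injective φ := by
    intro a b h
    rcases Sym2.eq_iff.mp h with ⟨-, h2⟩ | ⟨h1, h2⟩
    · exact h2
    · exfalso
      have hb : P b = nxt (P a) := by rw [← h1, hstar]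
      have ha : P a = nxt (P b) := by rw [h2, hstar]
      rw [hb] at ha
      exact hnxt2 (P a) ha.symm
  set ι : Sym2 V → ℕ := fun e => ((Fintype.equivFin (Sym2 V)) e).val with hιdef
  have hιinj : Function.Injective ι := by
    intro e1 e2 h
    exact (Fintype.equivFin (Sym2 V)).injective (Fin.val_injective h)
  set c : Sym2 V → ℕ := fun e => if h : ∃ w, φ w = e then (P h.choose).val else t + ι e
    with hcdef
  have hcφ : ∀ w, c (φ w) = (P w).val := by
    intro w
    have h : ∃ w', φ w' = φ w := ⟨w, rfl⟩
    rw [hcdef]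
    simp only [dif_pos h]
    rw [hφinj h.choose_spec]
  have hcout : ∀ e, (¬ ∃ w, φ w = e) → c e = t + ι e := by
    intro e h
    rw [hcdef]
    simp only [dif_neg h]
  have hMC : IsMCColoring G c := by
    intro u v
    by_cases huv : u = v
    · subst huv
      exact ⟨SimpleGraph.Walk.nil, SimpleGraph.Walk.IsPath.nil, 0, by simp⟩
    by_cases hadj : G.Adj u v
    · refine ⟨SimpleGraph.Walk.cons hadj SimpleGraph.Walk.nil, ?_, c s(u, v), ?_⟩
      · simp [SimpleGraph.Walk.isPath_def, huv]
      · intro e he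
        simp only [SimpleGraph.Walk.edges_cons, SimpleGraph.Walk.edges_nil,
          List.mem_singleton] at he
        rw [he]
    · have hX : P u = P v ∧ (u = star (P u) ∨ v = star (P v)) := by
        by_contra hX
        exact hadj ((hAdj u v).mpr ⟨huv, hX⟩)
      obtain ⟨hPuv, -⟩ := hX
      have h1 : G.Adj u (star (nxt (P u))) := (hφadj u).symm
      have h2 : G.Adj (star (nxt (P u))) v := by
        have := hφadj v
        rwa [← hPuv] at this
      refine ⟨SimpleGraph.Walk.cons h1 (SimpleGraph.Walk.cons h2 SimpleGraph.Walk.nil),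
        ?_, (P u).val, ?_⟩
      · simp [SimpleGraph.Walk.isPath_def, h1.ne, h2.ne, huv]
      · intro e he
        simp only [SimpleGraph.Walk.edges_cons, SimpleGraph.Walk.edges_nil,
          List.mem_cons, List.mem_singleton, List.not_mem_nil, or_false] at he
        rcases he with rfl | rfl
        · have : s(u, star (nxt (P u))) = φ u := Sym2.eq_swap
          rw [this, hcφ]
        · have : s(star (nxt (P u)), v) = φ v := by
            show s(star (nxt (P u)), v) = s(star (nxt (P v)), v)
            rw [hPuv]
          rw [this, hcφ, hPuv]
  refine ⟨c, hMC, ?_⟩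
  set TE : Finset (Sym2 V) := univ.image φ with hTEdef
  have hTEcard : TE.card = Fintype.card V := by
    rw [hTEdef, Finset.card_image_of_injective _ hφinj, Finset.card_univ]
  have hTEsub : TE ⊆ G.edgeFinset := by
    intro e he
    obtain ⟨w, -, rfl⟩ := Finset.mem_image.mp he
    exact hφE w
  set R := G.edgeFinset \ TE with hRdef
  have hRcard : R.card + TE.card = G.edgeFinset.card := Finset.card_sdiff_add_card_eq_card hTEsub
  have hEsplit : G.edgeFinset = TE ∪ R := by
    rw [hRdef, Finset.union_sdiff_of_subset hTEsub]
  have himg1 : TE.image c = (univ : Finset (Fin t)).image (fun j => j.val) := by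
    ext m
    simp only [hTEdef, Finset.image_image, Finset.mem_image, Finset.mem_univ, true_and]
    constructor
    · rintro ⟨w, rfl⟩
      exact ⟨P w, (hcφ w).symm ▸ rfl⟩
    · rintro ⟨j, rfl⟩
      refine ⟨star j, ?_⟩
      simp only [Function.comp_apply]
      rw [hcφ, hstar]
  have himg1card : (TE.image c).card = t := by
    rw [himg1, Finset.card_image_of_injective _ Fin.val_injective, Finset.card_univ,
      Fintype.card_fin]
  have himg2card : (R.image c).card = R.card := by
    apply Finset.card_image_of_injOn
    intro e1 he1 e2 he2 heq
    have hn1 : ¬ ∃ w, φ w = e1 := by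
      intro ⟨w, hw⟩
      exact (Finset.mem_sdiff.mp he1).2 (hw ▸ Finset.mem_image_of_mem φ (Finset.mem_univ w))
    have hn2 : ¬ ∃ w, φ w = e2 := by
      intro ⟨w, hw⟩
      exact (Finset.mem_sdiff.mp he2).2 (hw ▸ Finset.mem_image_of_mem φ (Finset.mem_univ w))
    rw [hcout e1 hn1, hcout e2 hn2] at heq
    exact hιinj (by omega)
  have hdisj : Disjoint (TE.image c) (R.image c) := by
    rw [Finset.disjoint_left]
    intro m hm1 hm2
    rw [himg1] at hm1
    obtain ⟨j, -, rfl⟩ := Finset.mem_image.mp hm1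
    obtain ⟨e, he, hce⟩ := Finset.mem_image.mp hm2
    have hn : ¬ ∃ w, φ w = e := by
      intro ⟨w, hw⟩
      exact (Finset.mem_sdiff.mp he).2 (hw ▸ Finset.mem_image_of_mem φ (Finset.mem_univ w))
    rw [hcout e hn] at hce
    have := j.isLt
    omega
  have : (G.edgeFinset.image c).card = t + R.card := by
    rw [hEsplit, Finset.image_union, Finset.card_union_of_disjoint hdisj, himg1card,
      himg2card]
  omega

open scoped Classical in
lemma scard_lemma {V : Type*} [Fintype V] {t : ℕ} (P : V → Fin t) (star : Fin t → V)
    (hstar : ∀ j, P (star j) = j) :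
    (univ.filter (fun v : V => v ≠ star (P v))).card + t = Fintype.card V := by
  have hsplit := Finset.card_filter_add_card_filter_not
    (s := (univ : Finset V)) (p := fun v => v ≠ star (P v))
  have himg : univ.filter (fun v : V => ¬ v ≠ star (P v)) = univ.image star := by
    ext v
    simp only [Finset.mem_filter, Finset.mem_univ, true_and, not_not, Finset.mem_image]
    constructor
    · intro h
      exact ⟨P v, h.symm⟩
    · rintro ⟨j, rfl⟩
      rw [hstar]
  have hstarinj : Function.Injective star := by
    intro a b h
    have := congrArg P h
    rwa [hstar, hstar] at this
  rw [himg] at hsplit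
  rw [Finset.card_image_of_injective _ hstarinj, Finset.card_univ, Fintype.card_fin]
    at hsplit
  rw [Finset.card_univ] at hsplit
  omega

open scoped Classical in
lemma echoose_lemma {V : Type*} [Fintype V] {t : ℕ} (G : SimpleGraph V)
    (P : V → Fin t) (star : Fin t → V) (hstar : ∀ j, P (star j) = j)
    (hAdj : ∀ u v : V, G.Adj u v ↔
      u ≠ v ∧ ¬ (P u = P v ∧ (u = star (P u) ∨ v = star (P v)))) :
    G.edgeFinset.card + (univ.filter (fun v : V => v ≠ star (P v))).card
      = (Fintype.card V).choose 2 := by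
  have hsub : G.edgeFinset ⊆ (⊤ : SimpleGraph V).edgeFinset :=
    SimpleGraph.edgeFinset_subset_edgeFinset.mpr le_top
  have htop : ((⊤ : SimpleGraph V).edgeFinset).card = (Fintype.card V).choose 2 :=
    SimpleGraph.card_edgeFinset_top_eq_card_choose_two
  have hsd := Finset.card_sdiff_add_card_eq_card hsub
  have hbij : (univ.filter (fun v : V => v ≠ star (P v))).card
      = ((⊤ : SimpleGraph V).edgeFinset \ G.edgeFinset).card := by
    apply Finset.card_bij (fun v _ => s(star (P v), v))
    · intro v hv
      rw [Finset.mem_filter] at hv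
      rw [Finset.mem_sdiff]
      constructor
      · rw [SimpleGraph.mem_edgeFinset, SimpleGraph.mem_edgeSet, SimpleGraph.top_adj]
        exact fun h => hv.2 h.symm
      · rw [SimpleGraph.mem_edgeFinset, SimpleGraph.mem_edgeSet]
        intro h
        have hh := (hAdj _ _).mp h
        exact hh.2 ⟨by rw [hstar], Or.inl (by rw [hstar])⟩
    · intro v1 hv1 v2 hv2 heq
      rcases Sym2.eq_iff.mp heq with ⟨-, h2⟩ | ⟨h1, h2⟩
      · exact h2
      · exfalso
        rw [Finset.mem_filter] at hv1
        have hthis : P v1 = P v2 := by rw [h2, hstar]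
        exact hv1.2 (by rw [hthis]; exact h2)
    · intro e he
      induction e using Sym2.ind with
      | _ a b =>
        rw [Finset.mem_sdiff, SimpleGraph.mem_edgeFinset, SimpleGraph.mem_edgeSet,
          SimpleGraph.mem_edgeFinset, SimpleGraph.mem_edgeSet, SimpleGraph.top_adj] at he
        obtain ⟨hne, hnadj⟩ := he
        have hX : P a = P b ∧ (a = star (P a) ∨ b = star (P b)) := by
          by_contra hX
          exact hnadj ((hAdj a b).mpr ⟨hne, hX⟩)
        obtain ⟨hP, hor⟩ := hX
        rcases hor with ha | hb
        · refine ⟨b, ?_, ?_⟩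
          · rw [Finset.mem_filter]
            refine ⟨Finset.mem_univ _, fun h => hne ?_⟩
            rw [ha, hP, ← h]
          · have : star (P b) = a := by rw [← hP, ← ha]
            rw [this]
        · refine ⟨a, ?_, ?_⟩
          · rw [Finset.mem_filter]
            refine ⟨Finset.mem_univ _, fun h => hne ?_⟩
            rw [hb, ← hP, ← h]
          · have : star (P a) = b := by rw [hP, ← hb]
            rw [this, Sym2.eq_swap]
  omega

open scoped Classical in
lemma ncard_conv {V : Type*} [Fintype V] (G : SimpleGraph V) (c : Sym2 V → ℕ) :
    (c '' G.edgeSet).ncard = (G.edgeFinset.image c).card := by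
  rw [← SimpleGraph.coe_edgeFinset, ← Finset.coe_image, Set.ncard_coe_finset]

/-- `mc(G_n^t) = C(n,2) - 2n + 2t`, where `G_n^t` is obtained from `K_n` by
partitioning the vertices into `t` classes of almost equal sizes, choosing a
vertex `star j` in each class, and deleting the edges from `star j` to the
other vertices of its class. -/
theorem stmt_4 {V : Type*} [Fintype V] (n t : ℕ) (hn : n = Fintype.card V)
    (ht : 3 ≤ t) (htn : t ≤ n)
    (P : V → Fin t) (star : Fin t → V) (hstar : ∀ j, P (star j) = j)
    (hbal : ∀ j r : Fin t, {v | P v = j}.ncard ≤ {v | P v = r}.ncard + 1)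
    (G : SimpleGraph V)
    (hAdj : ∀ u v : V, G.Adj u v ↔
      u ≠ v ∧ ¬ (P u = P v ∧ (u = star (P u) ∨ v = star (P v)))) :
    (mcNumber G : ℤ) = (n.choose 2 : ℤ) - 2 * n + 2 * t := by
  classical
  subst hn
  obtain ⟨c₀, hc₀MC, hc₀card⟩ := lower_bound_s4 ht G P star hstar hAdj
  have hScard := scard_lemma P star hstar
  have hchoose := echoose_lemma G P star hstar hAdj
  set M := {k | ∃ c : Sym2 V → ℕ, IsMCColoring G c ∧ (c '' G.edgeSet).ncard = k} with hMdef
  set L := (G.edgeFinset.image c₀).card with hLdef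
  have hub : ∀ k ∈ M, k + (univ.filter (fun v : V => v ≠ star (P v))).card
      ≤ G.edgeFinset.card := by
    rintro k ⟨c, hcMC, hk⟩
    rw [← hk, ncard_conv]
    exact upper_bound G P star hstar hAdj c hcMC
  have hmem : L ∈ M := ⟨c₀, hc₀MC, ncard_conv G c₀⟩
  have hLub : ∀ k ∈ M, k ≤ L := by
    intro k hk
    have h1 := hub k hk
    have h2 := hub L hmem
    omega
  have hmc : mcNumber G = L := by
    rw [mcNumber, ← hMdef]
    exact le_antisymm (csSup_le ⟨L, hmem⟩ hLub) (le_csSup ⟨L, hLub⟩ hmem)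
  rw [hmc]
  omega
end

section
/- Let n and k be positive integers with C(n,2) - 2n + 5 ≤ k ≤ C(n,2). Then f(n,k) = C(n,2) + ⌈(k - C(n,2))/2⌉; that is, every connected graph on n vertices with at least C(n,2) + ⌈(k - C(n,2))/2⌉ edges satisfies mc(G) ≥ k, and there exists a connected graph on n vertices with C(n,2) + ⌈(k - C(n,2))/2⌉ - 1 edges and mc(G) ≤ k - 1. -/
open SimpleGraph Finset
open scoped Classical

section Infrastructure

variable {V : Type*}

private lemma reachable_of_adj_imp {G H : SimpleGraph V} (h : ∀ x y : V, G.Adj x y → H.Reachable x y)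
    {x y : V} (hr : G.Reachable x y) : H.Reachable x y := by
  obtain ⟨w⟩ := hr
  induction w with
  | nil => exact Reachable.refl _
  | cons h' _ ih => exact (h _ _ h').trans ih

private lemma conn_card_le_aux [Fintype V] :
    ∀ (m : ℕ) (G : SimpleGraph V), G.edgeSet.ncard ≤ m → G.Connected →
      Fintype.card V ≤ m + 1 := by
  intro m
  induction m with
  | zero =>
    intro G hm hG
    have he : G.edgeSet = ∅ := by
      have := Set.ncard_eq_zero (Set.toFinite G.edgeSet) |>.mp (Nat.le_zero.mp hm)
      exact this
    have : ∀ x y : V, x = y := by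
      intro x y
      obtain ⟨w⟩ := hG.preconnected x y
      cases w with
      | nil => rfl
      | cons h' p =>
        exfalso
        have : s(x, _) ∈ G.edgeSet := h'
        rw [he] at this
        exact this
    have : Fintype.card V ≤ 1 := Fintype.card_le_one_iff.mpr fun a b => this a b
    omega
  | succ m ih =>
    intro G hm hG
    by_cases hac : G.IsAcyclic
    · haveI : Fintype G.edgeSet := Fintype.ofFinite _
      have ht : G.IsTree := ⟨hG, hac⟩
      have h1 := ht.card_edgeFinset
      have hcard : G.edgeFinset.card = G.edgeSet.ncard := by
        rw [Set.ncard_eq_toFinset_card']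
        congr 1
      omega
    · rw [isAcyclic_iff_forall_edge_isBridge] at hac
      push_neg at hac
      obtain ⟨e, he, hbr⟩ := hac
      induction e with
      | _ a b =>
        rw [isBridge_iff] at hbr
        push_neg at hbr
        have hab : G.Adj a b := he
        have hreach : (G \ fromEdgeSet {s(a, b)}).Reachable a b := hbr
        set G' := G \ fromEdgeSet {s(a, b)} with hG'
        have hGle : ∀ x y : V, G.Adj x y → G'.Reachable x y := by
          intro x y hxy
          by_cases hxye : s(x, y) = s(a, b)
          · rw [Sym2.eq_iff] at hxye
            rcases hxye with ⟨rfl, rfl⟩ | ⟨rfl, rfl⟩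
            · exact hreach
            · exact hreach.symm
          · exact Adj.reachable (by
              rw [hG', sdiff_adj]
              refine ⟨hxy, ?_⟩
              rw [fromEdgeSet_adj]
              rintro ⟨h1, -⟩
              exact hxye h1)
        have hG'conn : G'.Connected := by
          have hpre : G'.Preconnected := fun x y =>
            reachable_of_adj_imp hGle (hG.preconnected x y)
          exact (connected_iff _).mpr ⟨hpre, hG.nonempty⟩
        have hedge : G'.edgeSet = G.edgeSet \ {s(a, b)} := by
          simp [hG', edgeSet_sdiff, edgeSet_fromEdgeSet, edgeSet_sdiff_sdiff_isDiag]
        have hcount : G'.edgeSet.ncard ≤ m := by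
          rw [hedge]
          have := Set.ncard_diff_singleton_of_mem he
          omega
        exact le_trans (ih G' hcount hG'conn) (by omega)

private lemma conn_card_le [Fintype V] (G : SimpleGraph V) (hG : G.Connected) :
    Fintype.card V ≤ G.edgeSet.ncard + 1 :=
  conn_card_le_aux G.edgeSet.ncard G le_rfl hG

private lemma induce_supp_connected (G : SimpleGraph V) (C : G.ConnectedComponent) :
    (G.induce C.supp).Connected := by
  classical
  obtain ⟨u, hu⟩ := C.exists_rep
  have hus : u ∈ C.supp := hu
  apply G.induce_connected_of_patches u hus
  intro v hv
  have hr : G.Reachable u v := by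
    rw [ConnectedComponent.mem_supp_iff] at hv
    rw [← hu] at hv
    exact (ConnectedComponent.eq.mp hv.symm)
  obtain ⟨p⟩ := hr
  refine ⟨{x | x ∈ p.support}, ?_, p.start_mem_support, p.end_mem_support, ?_⟩
  · intro x hx
    have hux : G.Reachable u x := ⟨p.takeUntil x hx⟩
    rw [ConnectedComponent.mem_supp_iff, ← hu]
    exact ConnectedComponent.sound hux.symm
  · exact (p.connected_induce_support).preconnected _ _

private lemma comp_card_le_fiber [Fintype V] (G : SimpleGraph V) (C : G.ConnectedComponent) :
    C.supp.ncard ≤ {e ∈ G.edgeSet | ∀ x ∈ e, x ∈ C.supp}.ncard + 1 := by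
  classical
  haveI : Fintype C.supp := Fintype.ofFinite _
  have h1 : Fintype.card C.supp ≤ (G.induce C.supp).edgeSet.ncard + 1 :=
    conn_card_le _ (induce_supp_connected G C)
  have hinj : Function.Injective (Sym2.map (Subtype.val : C.supp → V)) :=
    Sym2.map.injective Subtype.val_injective
  have himg : Sym2.map Subtype.val '' (G.induce C.supp).edgeSet
      ⊆ {e ∈ G.edgeSet | ∀ x ∈ e, x ∈ C.supp} := by
    rintro e ⟨e', he', rfl⟩
    induction e' using Sym2.ind with
    | _ x y =>
      refine ⟨he', ?_⟩
      intro z hz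
      simp only [Sym2.map_pair_eq, Sym2.mem_iff] at hz
      rcases hz with rfl | rfl
      · exact x.2
      · exact y.2
  have h2 : (G.induce C.supp).edgeSet.ncard ≤ {e ∈ G.edgeSet | ∀ x ∈ e, x ∈ C.supp}.ncard := by
    calc (G.induce C.supp).edgeSet.ncard
        = (Sym2.map Subtype.val '' (G.induce C.supp).edgeSet).ncard :=
          (Set.ncard_image_of_injective _ hinj).symm
      _ ≤ _ := Set.ncard_le_ncard himg (Set.toFinite _)
  have h3 : C.supp.ncard = Fintype.card C.supp := by
    rw [Set.ncard_eq_toFinset_card', Set.toFinset_card]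
  omega

private lemma comp_card_le [Fintype V] (G : SimpleGraph V) (C : G.ConnectedComponent) :
    C.supp.ncard ≤ G.edgeSet.ncard + 1 := by
  have h1 := comp_card_le_fiber G C
  have h2 : {e ∈ G.edgeSet | ∀ x ∈ e, x ∈ C.supp}.ncard ≤ G.edgeSet.ncard :=
    Set.ncard_le_ncard (Set.sep_subset _ _) (Set.toFinite _)
  omega

private lemma supp_ncard_eq_filter [Fintype V] (H : SimpleGraph V) (K : H.ConnectedComponent) :
    K.supp.ncard = (Finset.univ.filter (fun v => H.connectedComponentMk v = K)).card := by
  classical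
  have : K.supp = ↑(Finset.univ.filter (fun v => H.connectedComponentMk v = K)) := by
    ext v; simp [ConnectedComponent.mem_supp_iff]
  rw [this, Set.ncard_coe_finset]

private lemma sum_supp_eq [Fintype V] (H : SimpleGraph V) [Fintype H.ConnectedComponent] :
    ∑ K ∈ Finset.univ, (K : H.ConnectedComponent).supp.ncard = Fintype.card V := by
  classical
  rw [← Finset.card_univ,
    Finset.card_eq_sum_card_fiberwise (f := H.connectedComponentMk)
      (fun v _ => Finset.mem_univ _)]
  exact Finset.sum_congr rfl fun K _ => supp_ncard_eq_filter H K

private lemma sum_supp_le_fiber [Fintype V] (H : SimpleGraph V) [Fintype H.ConnectedComponent]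
    (I : Finset H.ConnectedComponent) :
    ∑ K ∈ I, K.supp.ncard ≤ H.edgeSet.ncard + I.card := by
  classical
  haveI : Fintype H.edgeSet := Fintype.ofFinite _
  set fibF : H.ConnectedComponent → Finset (Sym2 V) :=
    fun K => H.edgeFinset.filter (fun e => ∀ x ∈ e, x ∈ K.supp) with hfibF
  have hperK : ∀ K, K.supp.ncard ≤ (fibF K).card + 1 := by
    intro K
    have hset : {e ∈ H.edgeSet | ∀ x ∈ e, x ∈ K.supp} = ↑(fibF K) := by
      ext e; simp [hfibF, Set.mem_setOf_eq, mem_edgeFinset]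
    have := comp_card_le_fiber H K
    rwa [hset, Set.ncard_coe_finset] at this
  have hdisj : ∀ K ∈ I, ∀ K' ∈ I, K ≠ K' → Disjoint (fibF K) (fibF K') := by
    intro K _ K' _ hne
    rw [Finset.disjoint_left]
    intro e h1 h2
    simp only [hfibF, Finset.mem_filter, mem_edgeFinset] at h1 h2
    obtain ⟨he, hK⟩ := h1
    obtain ⟨-, hK'⟩ := h2
    induction e using Sym2.ind with
    | _ a b =>
      have ha : a ∈ s(a, b) := Sym2.mem_mk_left a b
      have h3 := hK a ha
      have h4 := hK' a ha
      rw [ConnectedComponent.mem_supp_iff] at h3 h4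
      exact hne (h3 ▸ h4 ▸ rfl)
  have hsum : ∑ K ∈ I, (fibF K).card ≤ H.edgeSet.ncard := by
    rw [← Finset.card_biUnion hdisj]
    have h5 : I.biUnion fibF ⊆ H.edgeFinset := by
      intro e he
      simp only [Finset.mem_biUnion] at he
      obtain ⟨K, -, hK⟩ := he
      exact (Finset.mem_filter.mp hK).1
    have h6 := Finset.card_le_card h5
    have h7 : H.edgeSet.ncard = H.edgeFinset.card := by
      rw [Set.ncard_eq_toFinset_card']
      congr 1
    omega
  calc ∑ K ∈ I, K.supp.ncard ≤ ∑ K ∈ I, ((fibF K).card + 1) :=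
        Finset.sum_le_sum fun K _ => hperK K
    _ = ∑ K ∈ I, (fibF K).card + I.card := by
        rw [Finset.sum_add_distrib, Finset.sum_const, smul_eq_mul, mul_one]
    _ ≤ H.edgeSet.ncard + I.card := by omega

private lemma isolated_supp {H : SimpleGraph V} {z : V} (hz : ∀ w, ¬ H.Adj z w) :
    (H.connectedComponentMk z).supp = {z} := by
  ext w
  simp only [ConnectedComponent.mem_supp_iff, Set.mem_singleton_iff]
  constructor
  · intro hw
    have hr : H.Reachable z w := (ConnectedComponent.eq.mp hw).symm
    obtain ⟨p⟩ := hr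
    cases p with
    | nil => rfl
    | cons h _ => exact absurd h (hz _)
  · rintro rfl; rfl

private lemma exists_anchor [Fintype V] (H : SimpleGraph V) [Fintype H.ConnectedComponent]
    (hle : H.edgeSet.ncard + 3 ≤ Fintype.card V) :
    ∃ x : H.ConnectedComponent → V,
      (∀ K, 2 ≤ K.supp.ncard → x K ∉ K.supp) ∧
      (∀ K K', K ≠ K' → ¬(x K ∈ K'.supp ∧ x K' ∈ K.supp)) := by
  by_cases hiso : ∃ z : V, ∀ w, ¬ H.Adj z w
  · obtain ⟨z, hz⟩ := hiso
    refine ⟨fun _ => z, fun K hK hmem => ?_, fun K K' hne h12 => ?_⟩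
    · rw [ConnectedComponent.mem_supp_iff] at hmem
      rw [← hmem] at hK
      rw [isolated_supp hz] at hK
      simp [Set.ncard_singleton] at hK
    · obtain ⟨h1, h2⟩ := h12
      simp only [ConnectedComponent.mem_supp_iff] at h1 h2
      exact hne (h2.symm.trans h1)
  · have hc3 : 3 ≤ Fintype.card H.ConnectedComponent := by
      have h1 := sum_supp_le_fiber H (Finset.univ)
      rw [sum_supp_eq] at h1
      rw [Finset.card_univ] at h1
      omega
    set N := Fintype.card H.ConnectedComponent with hN
    let e := (Fintype.equivFin H.ConnectedComponent : H.ConnectedComponent ≃ Fin N)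
    let σ : H.ConnectedComponent → H.ConnectedComponent :=
      fun K => e.symm ⟨((e K).val + 1) % N, Nat.mod_lt _ (by omega)⟩
    have hσval : ∀ K, (e (σ K)).val = ((e K).val + 1) % N := by
      intro K
      simp only [σ, Equiv.apply_symm_apply]
    have hσne : ∀ K, σ K ≠ K := by
      intro K h
      have h2 := congrArg (fun t => (e t).val) h
      rw [hσval] at h2
      have hlt := (e K).isLt
      rcases Nat.lt_or_ge ((e K).val + 1) N with h' | h'
      · rw [Nat.mod_eq_of_lt h'] at h2; omega
      · have h3 : ((e K).val + 1) % N = 0 := by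
          have h4 : (e K).val + 1 = N := by omega
          simp [h4]
        omega
    have hσσ : ∀ K, σ (σ K) ≠ K := by
      intro K h
      have h2 := congrArg (fun t => (e t).val) h
      rw [hσval, hσval] at h2
      have hlt := (e K).isLt
      set a := (e K).val with ha
      rcases Nat.lt_or_ge (a + 1) N with h' | h'
      · rw [Nat.mod_eq_of_lt h'] at h2
        rcases Nat.lt_or_ge (a + 2) N with h'' | h''
        · rw [Nat.mod_eq_of_lt (by omega)] at h2; omega
        · have h5 : (a + 1 + 1) % N = 0 := by rw [show a + 1 + 1 = N by omega]; simp
          omega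
      · have ha1 : a + 1 = N := by omega
        have h0 : (a + 1) % N = 0 := by rw [ha1]; simp
        rw [h0] at h2
        rw [Nat.mod_eq_of_lt (by omega)] at h2
        omega
    refine ⟨fun K => ((σ K).exists_rep).choose, ?_, ?_⟩
    · intro K _ hmem
      have hrep := ((σ K).exists_rep).choose_spec
      rw [ConnectedComponent.mem_supp_iff] at hmem
      exact hσne K (hrep.symm.trans hmem)
    · intro K K' hne h12
      obtain ⟨h1, h2⟩ := h12
      have hrep := ((σ K).exists_rep).choose_spec
      have hrep' := ((σ K').exists_rep).choose_spec
      rw [ConnectedComponent.mem_supp_iff] at h1 h2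
      have e1 : σ K = K' := hrep.symm.trans h1
      have e2 : σ K' = K := hrep'.symm.trans h2
      exact hσσ K (by rw [e1, e2])

private lemma top_ncard_eq (n : ℕ) : (⊤ : SimpleGraph (Fin n)).edgeSet.ncard = n.choose 2 := by
  classical
  have h := card_edgeFinset_top_eq_card_choose_two (V := Fin n)
  rw [Fintype.card_fin] at h
  rw [Set.ncard_eq_toFinset_card', Set.toFinset_card, ← SimpleGraph.edgeFinset_card]
  exact h

private lemma compl_count {n : ℕ} (G : SimpleGraph (Fin n)) :
    G.edgeSet.ncard + Gᶜ.edgeSet.ncard = n.choose 2 := by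
  classical
  have hU : G.edgeSet ∪ Gᶜ.edgeSet = (⊤ : SimpleGraph (Fin n)).edgeSet := by
    ext e
    induction e using Sym2.ind with
    | _ x y =>
      simp only [Set.mem_union, mem_edgeSet, compl_adj, top_adj]
      constructor
      · rintro (h | ⟨h1, -⟩)
        · exact h.ne
        · exact h1
      · intro h
        by_cases hadj : G.Adj x y
        · exact Or.inl hadj
        · exact Or.inr ⟨h, hadj⟩
  have hdisj : Disjoint G.edgeSet Gᶜ.edgeSet := by
    rw [Set.disjoint_left]
    intro e h1 h2
    induction e using Sym2.ind with
    | _ x y =>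
      rw [mem_edgeSet] at h1 h2
      exact h2.2 h1
  have := Set.ncard_union_eq hdisj (Set.toFinite _) (Set.toFinite _)
  rw [hU, top_ncard_eq] at this
  omega

private lemma ceil_eq (k C : ℕ) (h : k ≤ C) :
    ⌈((k : ℚ) - (C : ℚ)) / 2⌉ = -(((C - k : ℕ) / 2 : ℕ) : ℤ) := by
  have h1 : (k : ℚ) - (C : ℚ) = -(((C - k : ℕ) : ℚ)) := by
    push_cast [Nat.cast_sub h]
    ring
  rw [h1, neg_div, Int.ceil_neg]
  congr 1
  have h2 : (((C - k : ℕ) : ℚ)) = (((C - k : ℕ) : ℤ) : ℚ) := by push_cast; ring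
  rw [h2, show (2:ℚ) = ((2:ℕ):ℚ) by norm_num, Rat.floor_intCast_div_natCast]
  omega

end Infrastructure

section MCLemmas

private lemma mcNumber_ge {V : Type*} [Fintype V] (G : SimpleGraph V) (k : ℕ)
    (c : Sym2 V → ℕ) (hc : IsMCColoring G c) (hk : k ≤ (c '' G.edgeSet).ncard) :
    k ≤ mcNumber G := by
  have hmem : (c '' G.edgeSet).ncard ∈
      {j | ∃ c' : Sym2 V → ℕ, IsMCColoring G c' ∧ (c' '' G.edgeSet).ncard = j} := ⟨c, hc, rfl⟩
  have hbdd : BddAbove {j | ∃ c' : Sym2 V → ℕ, IsMCColoring G c' ∧ (c' '' G.edgeSet).ncard = j} := by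
    refine ⟨G.edgeSet.ncard, fun j hj => ?_⟩
    obtain ⟨c', -, rfl⟩ := hj
    exact Set.ncard_image_le (Set.toFinite _)
  exact hk.trans (le_csSup hbdd hmem)

private lemma mcNumber_le_of {V : Type*} [Fintype V] (G : SimpleGraph V) (hG : G.Connected) (b : ℕ)
    (hb : ∀ c : Sym2 V → ℕ, IsMCColoring G c → (c '' G.edgeSet).ncard ≤ b) :
    mcNumber G ≤ b := by
  apply csSup_le
  · refine ⟨((fun _ => 0 : Sym2 V → ℕ) '' G.edgeSet).ncard, (fun _ => 0), ?_, rfl⟩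
    intro u v
    obtain ⟨w⟩ := hG.preconnected u v
    exact ⟨w.toPath, (w.toPath : G.Path u v).property, 0, fun _ _ => rfl⟩
  · rintro j ⟨c, hc, rfl⟩
    exact hb c hc

private lemma mc_ge {n : ℕ} (k : ℕ) (G : SimpleGraph (Fin n))
    (hs3 : Gᶜ.edgeSet.ncard + 3 ≤ n)
    (hk : k + Gᶜ.edgeSet.ncard ≤ G.edgeSet.ncard) : k ≤ mcNumber G := by
  classical
  set H := Gᶜ with hH
  haveI : Fintype H.ConnectedComponent := Fintype.ofFinite _
  have hcard : Fintype.card (Fin n) = n := Fintype.card_fin n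
  obtain ⟨x, hx1, hx2⟩ := exists_anchor H (by rw [hcard]; exact hs3)
  set I : Finset H.ConnectedComponent := Finset.univ.filter (fun K => 2 ≤ K.supp.ncard) with hI
  set suppF : H.ConnectedComponent → Finset (Fin n) := fun K => Set.toFinset K.supp with hsuppF
  set star : H.ConnectedComponent → Finset (Sym2 (Fin n)) :=
    fun K => (suppF K).image (fun a => s(x K, a)) with hstar
  set T : Finset (Sym2 (Fin n)) := I.biUnion star with hT
  have hsuppF_mem : ∀ K a, a ∈ suppF K ↔ H.connectedComponentMk a = K := by
    intro K a; simp [hsuppF, ConnectedComponent.mem_supp_iff]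
  have hadj_star : ∀ K, K ∈ I → ∀ a ∈ suppF K, G.Adj (x K) a := by
    intro K hKI a ha
    have hxK : x K ∉ K.supp := hx1 K (by simpa [hI] using hKI)
    have haK : a ∈ K.supp := by rw [hsuppF_mem] at ha; exact ha
    have hne : x K ≠ a := fun h => hxK (h ▸ haK)
    by_contra hGadj
    have : H.Adj (x K) a := by rw [hH, compl_adj]; exact ⟨hne, hGadj⟩
    have hmk : H.connectedComponentMk (x K) = K :=
      (ConnectedComponent.connectedComponentMk_eq_of_adj this).trans ((hsuppF_mem K a).mp ha)
    exact hxK hmk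
  have hstar_edge : ∀ K, K ∈ I → ∀ ee ∈ star K, ee ∈ G.edgeFinset := by
    intro K hKI ee hee
    simp only [hstar, Finset.mem_image] at hee
    obtain ⟨a, ha, rfl⟩ := hee
    rw [mem_edgeFinset, mem_edgeSet]
    exact hadj_star K hKI a ha
  have hstar_disj : ∀ K ∈ I, ∀ K' ∈ I, K ≠ K' → Disjoint (star K) (star K') := by
    intro K hKI K' hKI' hne
    rw [Finset.disjoint_left]
    intro ee h1 h2
    simp only [hstar, Finset.mem_image] at h1 h2
    obtain ⟨a, ha, rfl⟩ := h1
    obtain ⟨a', ha', heq⟩ := h2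
    rw [Sym2.eq_iff] at heq
    rw [hsuppF_mem] at ha ha'
    rcases heq with ⟨h3, h4⟩ | ⟨h3, h4⟩
    · subst h4; exact hne (ha.symm.trans ha') |>.elim
    · refine hx2 K' K hne.symm ⟨?_, ?_⟩
      · rw [ConnectedComponent.mem_supp_iff, h3]; exact ha
      · rw [ConnectedComponent.mem_supp_iff, ← h4]; exact ha'
  have hstar_card : ∀ K ∈ I, (star K).card = (suppF K).card := by
    intro K hKI
    apply Finset.card_image_of_injOn
    intro a ha b hb hab
    simp only [Finset.mem_coe] at ha hb
    rw [Sym2.eq_iff] at hab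
    rcases hab with ⟨-, h⟩ | ⟨h1, h2⟩
    · exact h
    · exfalso
      have hxK : x K ∉ K.supp := hx1 K (by simpa [hI] using hKI)
      rw [hsuppF_mem] at hb
      exact hxK (by rw [ConnectedComponent.mem_supp_iff, h1]; exact hb)
  obtain ⟨ι, hι⟩ := exists_injective_nat (Sym2 (Fin n))
  obtain ⟨ρ, hρ⟩ := exists_injective_nat H.ConnectedComponent
  set cl : Sym2 (Fin n) → ℕ := fun ee =>
    if h : ∃ K, K ∈ I ∧ ee ∈ star K then 2 * ρ (Classical.choose h) else 2 * ι ee + 1 with hcl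
  have hcl_star : ∀ K, K ∈ I → ∀ ee ∈ star K, cl ee = 2 * ρ K := by
    intro K hKI ee hee
    have h : ∃ K' ∈ I, ee ∈ star K' := ⟨K, hKI, hee⟩
    obtain ⟨hI', hee'⟩ := Classical.choose_spec h
    have hkk : Classical.choose h = K := by
      by_contra hne
      have hd := hstar_disj _ hI' _ hKI hne
      rw [Finset.disjoint_left] at hd
      exact hd hee' hee
    simp only [hcl, dif_pos h, hkk]
  have hcl_nonstar : ∀ ee, ee ∉ T → cl ee = 2 * ι ee + 1 := by
    intro ee hee
    have hne : ¬∃ K ∈ I, ee ∈ star K := by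
      rintro ⟨K, hKI, hK⟩
      exact hee (Finset.mem_biUnion.mpr ⟨K, hKI, hK⟩)
    simp only [hcl, dif_neg hne]
  have hmc : IsMCColoring G cl := by
    intro u v
    by_cases huv : u = v
    · subst huv
      exact ⟨Walk.nil, Walk.IsPath.nil, 0, by simp⟩
    by_cases hadj : G.Adj u v
    · refine ⟨Walk.cons hadj Walk.nil, ?_, cl s(u, v), ?_⟩
      · simp [Walk.isPath_def, huv]
      · intro e he
        simp only [Walk.edges_cons, Walk.edges_nil, List.mem_singleton] at he
        rw [he]
    · have hHadj : H.Adj u v := by rw [hH, compl_adj]; exact ⟨huv, hadj⟩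
      set K := H.connectedComponentMk u with hK
      have hvK : v ∈ K.supp := by
        rw [ConnectedComponent.mem_supp_iff, hK]
        exact (ConnectedComponent.connectedComponentMk_eq_of_adj hHadj).symm
      have huK : u ∈ K.supp := by rw [ConnectedComponent.mem_supp_iff, hK]
      have hKI : K ∈ I := by
        rw [hI, Finset.mem_filter]
        refine ⟨Finset.mem_univ _, ?_⟩
        have hsub : {u, v} ⊆ K.supp := by
          intro z hz; rcases hz with rfl | rfl; exacts [huK, hvK]
        calc 2 = ({u, v} : Set (Fin n)).ncard := (Set.ncard_pair huv).symm
          _ ≤ K.supp.ncard := Set.ncard_le_ncard hsub (Set.toFinite _)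
      have huF : u ∈ suppF K := (hsuppF_mem K u).mpr hK.symm
      have hvF : v ∈ suppF K := by rw [hsuppF_mem]; exact (ConnectedComponent.mem_supp_iff _ _).mp hvK
      have hadj1 : G.Adj u (x K) := (hadj_star K hKI u huF).symm
      have hadj2 : G.Adj (x K) v := hadj_star K hKI v hvF
      have hxK : x K ∉ K.supp := hx1 K (by simpa [hI] using hKI)
      have hune : u ≠ x K := fun h => hxK (h ▸ huK)
      have hvne : x K ≠ v := fun h => hxK (h.symm ▸ hvK)
      refine ⟨Walk.cons hadj1 (Walk.cons hadj2 Walk.nil), ?_, 2 * ρ K, ?_⟩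
      · simp [Walk.isPath_def, huv, hune, hvne]
      · intro e he
        simp only [Walk.edges_cons, Walk.edges_nil, List.mem_cons, List.mem_singleton,
          List.not_mem_nil, or_false] at he
        rcases he with rfl | rfl
        · apply hcl_star K hKI
          rw [hstar, Finset.mem_image]
          exact ⟨u, huF, Sym2.eq_swap⟩
        · apply hcl_star K hKI
          rw [hstar, Finset.mem_image]
          exact ⟨v, hvF, rfl⟩
  apply mcNumber_ge G k cl hmc
  have hTsub : T ⊆ G.edgeFinset := by
    intro ee hee
    rw [hT, Finset.mem_biUnion] at hee
    obtain ⟨K, hKI, hK⟩ := hee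
    exact hstar_edge K hKI ee hK
  have himg : cl '' G.edgeSet = ↑(G.edgeFinset.image cl) := by
    ext j
    simp [Set.mem_image, Finset.coe_image, mem_edgeFinset]
  rw [himg, Set.ncard_coe_finset]
  have hsplit : G.edgeFinset = (G.edgeFinset \ T) ∪ T := (Finset.sdiff_union_of_subset hTsub).symm
  rw [hsplit, Finset.image_union]
  have hdisj2 : Disjoint ((G.edgeFinset \ T).image cl) (T.image cl) := by
    rw [Finset.disjoint_left]
    intro j h1 h2
    rw [Finset.mem_image] at h1 h2
    obtain ⟨e1, he1, hje1⟩ := h1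
    obtain ⟨e2, he2, hje2⟩ := h2
    rw [Finset.mem_sdiff] at he1
    have g1 := hcl_nonstar e1 he1.2
    rw [hT, Finset.mem_biUnion] at he2
    obtain ⟨K, hKI, hK⟩ := he2
    have g2 := hcl_star K hKI e2 hK
    omega
  rw [Finset.card_union_of_disjoint hdisj2]
  have hcard1 : ((G.edgeFinset \ T).image cl).card = (G.edgeFinset \ T).card := by
    apply Finset.card_image_of_injOn
    intro e1 h1 e2 h2 he
    simp only [Finset.coe_sdiff, Set.mem_diff, Finset.mem_coe] at h1 h2
    rw [hcl_nonstar e1 h1.2, hcl_nonstar e2 h2.2] at he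
    exact hι (by omega)
  have hcard2 : (T.image cl).card = I.card := by
    have : T.image cl = I.image (fun K => 2 * ρ K) := by
      apply Finset.Subset.antisymm
      · intro j hj
        rw [Finset.mem_image] at hj
        obtain ⟨ee, hee, rfl⟩ := hj
        rw [hT, Finset.mem_biUnion] at hee
        obtain ⟨K, hKI, hK⟩ := hee
        rw [hcl_star K hKI ee hK]
        exact Finset.mem_image_of_mem _ hKI
      · intro j hj
        rw [Finset.mem_image] at hj
        obtain ⟨K, hKI, rfl⟩ := hj
        obtain ⟨a, ha⟩ := K.exists_rep
        have haF : a ∈ suppF K := by rw [hsuppF_mem]; exact ha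
        have hmem : s(x K, a) ∈ star K := by
          rw [hstar, Finset.mem_image]; exact ⟨a, haF, rfl⟩
        rw [Finset.mem_image]
        refine ⟨s(x K, a), ?_, hcl_star K hKI _ hmem⟩
        rw [hT, Finset.mem_biUnion]
        exact ⟨K, hKI, hmem⟩
    rw [this]
    apply Finset.card_image_of_injOn
    intro a _ b _ hab
    simp only at hab
    exact hρ (by omega)
  rw [hcard1, hcard2]
  have hTcard : T.card = ∑ K ∈ I, (suppF K).card := by
    rw [hT, Finset.card_biUnion hstar_disj]
    exact Finset.sum_congr rfl hstar_card
  have hsupp_ncard : ∀ K, (suppF K).card = K.supp.ncard := by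
    intro K
    rw [hsuppF]
    rw [Set.ncard_eq_toFinset_card']
  have hTle : T.card ≤ H.edgeSet.ncard + I.card := by
    rw [hTcard]
    calc ∑ K ∈ I, (suppF K).card = ∑ K ∈ I, K.supp.ncard :=
          Finset.sum_congr rfl fun K _ => hsupp_ncard K
      _ ≤ H.edgeSet.ncard + I.card := sum_supp_le_fiber H I
  have hTm : T.card ≤ G.edgeFinset.card := Finset.card_le_card hTsub
  have hsdiff : (G.edgeFinset \ T).card = G.edgeFinset.card - T.card :=
    Finset.card_sdiff_of_subset hTsub
  have hm : G.edgeFinset.card = G.edgeSet.ncard := by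
    rw [Set.ncard_eq_toFinset_card']
    congr 1
  omega

end MCLemmas

/-- The complete graph on `Fin n` minus a star with `q` edges at vertex `0`
(the removed edges join `0` to `1, …, q`). -/
def starComplGraph (n q : ℕ) : SimpleGraph (Fin n) where
  Adj x y := x ≠ y ∧ ¬(x.val = 0 ∧ 1 ≤ y.val ∧ y.val ≤ q) ∧ ¬(y.val = 0 ∧ 1 ≤ x.val ∧ x.val ≤ q)
  symm := ⟨by rintro x y ⟨h1, h2, h3⟩; exact ⟨h1.symm, h3, h2⟩⟩
  loopless := ⟨by rintro x ⟨h1, -⟩; exact h1 rfl⟩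

section SCG

variable {n q : ℕ}

private lemma scg_connected (h2 : q + 2 ≤ n) : (starComplGraph n q).Connected := by
  have hn : 0 < n := by omega
  set z : Fin n := ⟨n - 1, by omega⟩ with hzdef
  have hz : ∀ x : Fin n, x ≠ z → (starComplGraph n q).Adj x z := by
    intro x hx
    refine ⟨hx, ?_, ?_⟩
    · rintro ⟨-, -, hzq⟩
      simp only [hzdef] at hzq
      omega
    · rintro ⟨hz0, -⟩
      simp only [hzdef] at hz0
      omega
  have hreach : ∀ x : Fin n, (starComplGraph n q).Reachable x z := by
    intro x
    rcases eq_or_ne x z with rfl | hxz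
    · exact Reachable.refl _
    · exact (hz x hxz).reachable
  rw [connected_iff]
  exact ⟨fun x y => (hreach x).trans (hreach y).symm, ⟨z⟩⟩

private lemma scg_edge_card (h1 : 1 ≤ q) (h2 : q + 2 ≤ n) :
    (starComplGraph n q).edgeSet.ncard + q = n.choose 2 := by
  classical
  set v0 : Fin n := ⟨0, by omega⟩ with hv0
  set S : Set (Fin n) := {i | 1 ≤ i.val ∧ i.val ≤ q} with hS
  set B : Set (Sym2 (Fin n)) := (fun i => s(v0, i)) '' S with hB
  have hv0S : v0 ∉ S := by simp [hS, hv0]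
  have hBsub : B ⊆ (⊤ : SimpleGraph (Fin n)).edgeSet := by
    rintro e ⟨i, hi, rfl⟩
    rw [mem_edgeSet, top_adj]
    intro h
    rw [← h] at hi
    exact hv0S hi
  have hBmem : ∀ x y : Fin n, (s(x, y) ∈ B ↔ (x = v0 ∧ y ∈ S) ∨ (y = v0 ∧ x ∈ S)) := by
    intro x y
    constructor
    · rintro ⟨i, hi, heq⟩
      rw [Sym2.eq_iff] at heq
      rcases heq with ⟨hx, hy⟩ | ⟨hx, hy⟩
      · exact Or.inl ⟨hx.symm, hy ▸ hi⟩
      · exact Or.inr ⟨hx.symm, hy ▸ hi⟩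
    · rintro (⟨rfl, hy⟩ | ⟨rfl, hx⟩)
      · exact ⟨y, hy, rfl⟩
      · exact ⟨x, hx, Sym2.eq_swap⟩
  have hE : (starComplGraph n q).edgeSet = (⊤ : SimpleGraph (Fin n)).edgeSet \ B := by
    ext e
    induction e using Sym2.ind with
    | _ x y =>
      simp only [mem_edgeSet, top_adj, Set.mem_diff]
      constructor
      · rintro ⟨hne, hc1, hc2⟩
        refine ⟨hne, ?_⟩
        rw [hBmem]
        rintro (⟨rfl, hy⟩ | ⟨rfl, hx⟩)
        · exact hc1 ⟨rfl, hy.1, hy.2⟩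
        · exact hc2 ⟨rfl, hx.1, hx.2⟩
      · rintro ⟨hne, hnB⟩
        rw [hBmem] at hnB
        push_neg at hnB
        refine ⟨hne, ?_, ?_⟩
        · rintro ⟨hx0, hy1, hy2⟩
          exact hnB.1 (by rw [hv0]; exact Fin.ext hx0) ⟨hy1, hy2⟩
        · rintro ⟨hy0, hx1, hx2⟩
          exact hnB.2 (by rw [hv0]; exact Fin.ext hy0) ⟨hx1, hx2⟩
  have hScard : S.ncard = q := by
    rw [Set.ncard_eq_toFinset_card']
    have hSf : S.toFinset = Finset.filter (fun i : Fin n => 1 ≤ i.val ∧ i.val ≤ q) Finset.univ := by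
      ext i; simp [hS]
    rw [hSf]
    have hbij : (Finset.filter (fun i : Fin n => 1 ≤ i.val ∧ i.val ≤ q) Finset.univ).card
        = (Finset.Icc 1 q).card := by
      apply Finset.card_bij (fun (a : Fin n) _ => a.val)
      · intro a ha
        simp only [Finset.mem_filter] at ha
        rw [Finset.mem_Icc]
        exact ha.2
      · intro a _ b _ hab
        exact Fin.ext hab
      · intro b hb
        rw [Finset.mem_Icc] at hb
        refine ⟨⟨b, by omega⟩, ?_, rfl⟩
        simp only [Finset.mem_filter]
        exact ⟨Finset.mem_univ _, hb.1, hb.2⟩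
    rw [hbij, Nat.card_Icc]
    omega
  have hBcard : B.ncard = q := by
    rw [hB]
    rw [Set.ncard_image_of_injOn]
    · exact hScard
    · intro i hi j hj hij
      rw [Sym2.eq_iff] at hij
      rcases hij with ⟨-, h⟩ | ⟨h1, h2⟩
      · exact h
      · exfalso; exact hv0S (h2 ▸ hi)
  have htop : (⊤ : SimpleGraph (Fin n)).edgeSet.ncard = n.choose 2 := top_ncard_eq n
  have hdiff := Set.ncard_diff hBsub (Set.toFinite _)
  have hBle : B.ncard ≤ (⊤ : SimpleGraph (Fin n)).edgeSet.ncard :=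
    Set.ncard_le_ncard hBsub (Set.toFinite _)
  rw [hE, hdiff, hBcard, htop]
  rw [htop, hBcard] at hBle
  omega

private lemma scg_colors_le (h1 : 1 ≤ q) (h2 : q + 2 ≤ n) (c : Sym2 (Fin n) → ℕ)
    (hc : IsMCColoring (starComplGraph n q) c) :
    (c '' (starComplGraph n q).edgeSet).ncard + q ≤ (starComplGraph n q).edgeSet.ncard := by
  classical
  set G2 := starComplGraph n q with hG2
  set v0 : Fin n := ⟨0, by omega⟩ with hv0
  set SF : Finset (Fin n) := Finset.univ.filter (fun i => 1 ≤ i.val ∧ i.val ≤ q) with hSF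
  have hv0SF : v0 ∉ SF := by simp [hSF, hv0]
  have hSFcard : SF.card = q := by
    have hbij : SF.card = (Finset.Icc 1 q).card := by
      apply Finset.card_bij (fun (a : Fin n) _ => a.val)
      · intro a ha
        simp only [hSF, Finset.mem_filter] at ha
        rw [Finset.mem_Icc]; exact ha.2
      · intro a _ b _ hab; exact Fin.ext hab
      · intro b hb
        rw [Finset.mem_Icc] at hb
        exact ⟨⟨b, by omega⟩, by simp [hSF]; omega, rfl⟩
    rw [hbij, Nat.card_Icc]; omega
  have hpu : ∀ u : Fin n, ∃ p : G2.Walk v0 u, ∃ j : ℕ, ∀ e ∈ p.edges, c e = j := by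
    intro u
    obtain ⟨p, -, j, hj⟩ := hc v0 u
    exact ⟨p, j, hj⟩
  set pu : ∀ u : Fin n, G2.Walk v0 u := fun u => (hpu u).choose with hpudef
  set κ : Fin n → ℕ := fun u => (hpu u).choose_spec.choose with hκdef
  have hκ : ∀ u : Fin n, ∀ e ∈ (pu u).edges, c e = κ u :=
    fun u => (hpu u).choose_spec.choose_spec
  have hSFne : ∀ u ∈ SF, u ≠ v0 := by
    intro u hu h
    rw [h] at hu
    exact hv0SF hu
  have hpu_ne : ∀ u ∈ SF, (pu u).edges ≠ [] := by
    intro u hu h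
    have hlen : (pu u).length = 0 := by
      have := (pu u).length_edges
      rw [h] at this
      simpa using this.symm
    exact hSFne u hu ((pu u).eq_of_length_eq_zero hlen).symm
  have hfirst : ∀ u ∈ SF, ∃ e ∈ G2.edgeSet, c e = κ u := by
    intro u hu
    obtain ⟨e, he⟩ := List.exists_mem_of_ne_nil _ (hpu_ne u hu)
    exact ⟨e, (pu u).edges_subset_edgeSet he, hκ u e he⟩
  set EF : Finset (Sym2 (Fin n)) := G2.edgeFinset with hEF
  set fib : ℕ → Finset (Sym2 (Fin n)) := fun j => EF.filter (fun e => c e = j) with hfib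
  set K : Finset ℕ := SF.image κ with hK
  have hKsub : K ⊆ EF.image c := by
    intro j hj
    rw [hK, Finset.mem_image] at hj
    obtain ⟨u, hu, rfl⟩ := hj
    obtain ⟨e, he, hce⟩ := hfirst u hu
    rw [Finset.mem_image]
    exact ⟨e, by rwa [hEF, mem_edgeFinset], hce⟩
  have hfibK : ∀ j ∈ K, (SF.filter (fun u => κ u = j)).card + 1 ≤ (fib j).card := by
    intro j hjK
    rw [hK, Finset.mem_image] at hjK
    obtain ⟨u0, hu0, hju0⟩ := hjK
    set F : SimpleGraph (Fin n) :=
      { Adj := fun x y => G2.Adj x y ∧ c s(x, y) = j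
        symm := ⟨by
          rintro x y ⟨ha, hb⟩
          exact ⟨ha.symm, by rwa [Sym2.eq_swap]⟩⟩
        loopless := ⟨fun x h => G2.irrefl h.1⟩ } with hF
    have hFedge : ∀ e, e ∈ F.edgeSet ↔ e ∈ G2.edgeSet ∧ c e = j := by
      intro e
      induction e using Sym2.ind with
      | _ x y => exact Iff.rfl
    have htransfer : ∀ u ∈ SF, κ u = j → F.Reachable v0 u := by
      intro u hu hju
      refine ⟨(pu u).transfer F ?_⟩
      intro e he
      rw [hFedge]
      exact ⟨(pu u).edges_subset_edgeSet he, by rw [hκ u e he, hju]⟩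
    set R := F.connectedComponentMk v0 with hR
    have hmemR : ∀ u ∈ SF, κ u = j → u ∈ R.supp := by
      intro u hu hju
      rw [ConnectedComponent.mem_supp_iff, hR]
      exact ConnectedComponent.sound (htransfer u hu hju).symm
    have hw0 : ∃ w0 : Fin n, F.Adj v0 w0 := by
      obtain ⟨pw⟩ := htransfer u0 hu0 hju0
      cases pw with
      | nil => exact absurd hu0 hv0SF
      | cons h p => exact ⟨_, h⟩
    obtain ⟨w0, hFw0⟩ := hw0
    have hw0R : w0 ∈ R.supp := by
      rw [ConnectedComponent.mem_supp_iff, hR]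
      exact ConnectedComponent.sound hFw0.reachable.symm
    have hv0R : v0 ∈ R.supp := by rw [ConnectedComponent.mem_supp_iff, hR]
    have hw0SF : w0 ∉ SF := by
      intro hmem
      have hadj : G2.Adj v0 w0 := hFw0.1
      rw [hG2] at hadj
      obtain ⟨-, hc1, -⟩ := hadj
      simp only [hSF, Finset.mem_filter] at hmem
      exact hc1 ⟨rfl, hmem.2⟩
    have hw0v0 : w0 ≠ v0 := fun h => F.irrefl (h ▸ hFw0)
    set RF : Finset (Fin n) := Set.toFinset R.supp with hRF
    have hsub : insert v0 (insert w0 (SF.filter (fun u => κ u = j))) ⊆ RF := by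
      intro a ha
      rw [hRF, Set.mem_toFinset]
      rcases Finset.mem_insert.mp ha with rfl | ha
      · exact hv0R
      rcases Finset.mem_insert.mp ha with rfl | ha
      · exact hw0R
      · rw [Finset.mem_filter] at ha
        exact hmemR a ha.1 ha.2
    have hcard_ins : (insert v0 (insert w0 (SF.filter (fun u => κ u = j)))).card
        = (SF.filter (fun u => κ u = j)).card + 2 := by
      rw [Finset.card_insert_of_notMem, Finset.card_insert_of_notMem]
      · intro hmem
        exact hw0SF (Finset.mem_filter.mp hmem).1
      · intro hmem
        rcases Finset.mem_insert.mp hmem with h | h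
        · exact hw0v0 h.symm
        · exact hv0SF (Finset.mem_filter.mp h).1
    have hRcard : (SF.filter (fun u => κ u = j)).card + 2 ≤ R.supp.ncard := by
      have h9 := Finset.card_le_card hsub
      have h10 : RF.card = R.supp.ncard := by
        rw [hRF, ← Set.ncard_eq_toFinset_card']
      omega
    have hcomp := comp_card_le F R
    have hFcard : F.edgeSet.ncard = (fib j).card := by
      have : F.edgeSet = ↑(fib j) := by
        ext e
        rw [hFedge, hfib]
        simp [hEF, mem_edgeFinset]
      rw [this, Set.ncard_coe_finset]
    omega
  have himg : (c '' G2.edgeSet).ncard = (EF.image c).card := by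
    have : c '' G2.edgeSet = ↑(EF.image c) := by
      ext j
      simp [hEF, Set.mem_image, mem_edgeFinset]
    rw [this, Set.ncard_coe_finset]
  have hm : G2.edgeSet.ncard = EF.card := by
    rw [hEF, Set.ncard_eq_toFinset_card']
    congr 1
  rw [himg, hm]
  have hfibsum : ∑ j ∈ EF.image c, (fib j).card = EF.card := by
    rw [hfib]
    exact (Finset.card_eq_sum_card_fiberwise (fun e he => Finset.mem_image_of_mem c he)).symm
  have hqsum : ∑ j ∈ K, (SF.filter (fun u => κ u = j)).card = q := by
    rw [← hSFcard, hK]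
    exact (Finset.card_eq_sum_card_fiberwise (fun u hu => Finset.mem_image_of_mem κ hu)).symm
  have hsplit : ∑ j ∈ EF.image c \ K, (fib j).card + ∑ j ∈ K, (fib j).card = EF.card := by
    rw [Finset.sum_sdiff hKsub]
    exact hfibsum
  have hbound1 : ∑ j ∈ K, (fib j).card ≥ q + K.card := by
    calc ∑ j ∈ K, (fib j).card ≥ ∑ j ∈ K, ((SF.filter (fun u => κ u = j)).card + 1) :=
          Finset.sum_le_sum hfibK
      _ = ∑ j ∈ K, (SF.filter (fun u => κ u = j)).card + K.card := by
          rw [Finset.sum_add_distrib, Finset.sum_const, smul_eq_mul, mul_one]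
      _ = q + K.card := by rw [hqsum]
  have hbound2 : (EF.image c \ K).card ≤ ∑ j ∈ EF.image c \ K, (fib j).card := by
    calc (EF.image c \ K).card = ∑ _j ∈ EF.image c \ K, 1 := by
          rw [Finset.sum_const, smul_eq_mul, mul_one]
      _ ≤ ∑ j ∈ EF.image c \ K, (fib j).card := by
          apply Finset.sum_le_sum
          intro j hj
          have hjim : j ∈ EF.image c := (Finset.mem_sdiff.mp hj).1
          rw [Finset.mem_image] at hjim
          obtain ⟨e, he, rfl⟩ := hjim
          apply Finset.card_pos.mpr
          exact ⟨e, Finset.mem_filter.mpr ⟨he, rfl⟩⟩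
  have hsdcard : (EF.image c \ K).card = (EF.image c).card - K.card :=
    Finset.card_sdiff_of_subset hKsub
  have hKcard : K.card ≤ (EF.image c).card := Finset.card_le_card hKsub
  omega

end SCG

/-- For `C(n,2) - 2n + 5 ≤ k ≤ C(n,2)` one has
`f(n,k) = C(n,2) + ⌈(k - C(n,2))/2⌉`. -/
theorem stmt_6 (n k : ℕ) (hk1 : (n.choose 2 : ℤ) - 2 * n + 5 ≤ (k : ℤ))
    (hk2 : k ≤ n.choose 2) :
    (∀ G : SimpleGraph (Fin n), G.Connected →
      (n.choose 2 : ℤ) + ⌈((k : ℚ) - (n.choose 2 : ℚ)) / 2⌉ ≤ (G.edgeSet.ncard : ℤ) →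
      k ≤ mcNumber G) ∧
    (∃ G : SimpleGraph (Fin n), G.Connected ∧
      (G.edgeSet.ncard : ℤ) = (n.choose 2 : ℤ) + ⌈((k : ℚ) - (n.choose 2 : ℚ)) / 2⌉ - 1 ∧
      (mcNumber G : ℤ) ≤ (k : ℤ) - 1) := by
  classical
  have hn3 : 3 ≤ n := by
    by_contra h
    push_neg at h
    interval_cases n <;> simp [Nat.choose] at hk1 hk2 <;> omega
  -- 2 * C(n,2) = n * (n-1)
  have h2C : 2 * n.choose 2 = n * (n - 1) := by
    obtain ⟨c, hc⟩ := Nat.even_mul_succ_self (n - 1)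
    rw [show n - 1 + 1 = n by omega] at hc
    have hc2 : n * (n - 1) = 2 * c := by
      calc n * (n - 1) = (n - 1) * n := Nat.mul_comm _ _
        _ = 2 * c := by omega
    rw [Nat.choose_two_right]
    omega
  -- C(n,2) ≥ 2n - 3
  have hClin : 2 * n.choose 2 + 6 ≥ 4 * n := by
    obtain ⟨a, rfl⟩ : ∃ a, n = a + 3 := ⟨n - 3, by omega⟩
    have hmul : (a + 3) * ((a + 3) - 1) = a * a + 5 * a + 6 := by
      rw [show (a + 3) - 1 = a + 2 by omega]; ring
    omega
  -- t ≤ 2n - 5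
  have ht : n.choose 2 ≤ k + 2 * n - 5 ∧ 5 ≤ k + 2 * n := by omega
  have hk2' : 2 ≤ k := by omega
  have hceil := ceil_eq k (n.choose 2) hk2
  constructor
  · intro G hG hedge
    rw [hceil] at hedge
    have hcc := compl_count G
    have hGm : G.edgeSet.ncard ≤ n.choose 2 := by omega
    apply mc_ge k G
    · omega
    · omega
  · set q : ℕ := (n.choose 2 - k) / 2 + 1 with hq
    have hq1 : 1 ≤ q := by omega
    have hq2 : q + 2 ≤ n := by omega
    have hecard := scg_edge_card hq1 hq2
    refine ⟨starComplGraph n q, scg_connected hq2, ?_, ?_⟩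
    · rw [hceil]
      omega
    · have hmc : mcNumber (starComplGraph n q) ≤ (starComplGraph n q).edgeSet.ncard - q := by
        apply mcNumber_le_of _ (scg_connected hq2)
        intro c hc
        have := scg_colors_le hq1 hq2 c hc
        omega
      have hle : (starComplGraph n q).edgeSet.ncard - q + 1 ≤ k := by omega
      omega
end

section
/- Let G be a connected graph with n vertices and m edges, and let t be an integer with 2 ≤ t ≤ n - 1. If C(n-t,2) + t(n-t) ≤ m ≤ C(n-t,2) + t(n-t) + (t-2), then mc(G) ≤ m - t + 1. -/
open SimpleGraph

namespace MCAux

variable {V : Type*} {H : SimpleGraph V} {u v : V}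

lemma length_drop (p : H.Walk u v) (n : ℕ) : (p.drop n).length = p.length - n := by
  induction p generalizing n with
  | nil => simp [SimpleGraph.Walk.drop]
  | cons h q ih =>
    cases n with
    | zero => simp [SimpleGraph.Walk.drop]
    | succ n => simp [SimpleGraph.Walk.drop, ih]

lemma getVert_drop (p : H.Walk u v) (n i : ℕ) :
    (p.drop n).getVert i = p.getVert (n + i) := by
  induction p generalizing n with
  | nil => simp [SimpleGraph.Walk.drop, SimpleGraph.Walk.getVert_of_length_le]
  | cons h q ih =>
    cases n with
    | zero => simp [SimpleGraph.Walk.drop]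
    | succ n =>
      simp only [SimpleGraph.Walk.drop, SimpleGraph.Walk.getVert_copy, ih]
      have : n + 1 + i = (n + i) + 1 := by omega
      rw [this]; exact (ih n).trans (SimpleGraph.Walk.getVert_cons_succ ..).symm

lemma dist_getVert_right (p : H.Walk u v) (i : ℕ) :
    H.dist (p.getVert i) v ≤ p.length - i := by
  simpa [length_drop] using SimpleGraph.dist_le (p.drop i)

lemma dist_getVert_left (p : H.Walk u v) {i : ℕ} (hi : i ≤ p.length) :
    H.dist u (p.getVert i) ≤ i := by
  have h := dist_getVert_right p.reverse (p.length - i)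
  rw [SimpleGraph.Walk.getVert_reverse] at h
  have h2 : p.length - (p.length - i) = i := by omega
  rw [h2] at h
  rw [SimpleGraph.dist_comm]
  simpa [h2] using h

lemma reachable_getVert_right (p : H.Walk u v) (i : ℕ) :
    H.Reachable (p.getVert i) v := ⟨p.drop i⟩

lemma dist_triangle' {x : V} (h1 : H.Reachable u x) (h2 : H.Reachable x v) :
    H.dist u v ≤ H.dist u x + H.dist x v := by
  obtain ⟨p, hp⟩ := h1.exists_walk_length_eq_dist
  obtain ⟨q, hq⟩ := h2.exists_walk_length_eq_dist
  rw [← hp, ← hq, ← SimpleGraph.Walk.length_append]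
  exact SimpleGraph.dist_le _

lemma geodesic_getVert (p : H.Walk u v) (hp : p.length = H.dist u v) {i : ℕ}
    (hi : i ≤ p.length) :
    H.dist u (p.getVert i) = i ∧ H.dist (p.getVert i) v = p.length - i := by
  have h1 := dist_getVert_left p hi
  have h2 := dist_getVert_right p i
  have hru : H.Reachable u (p.getVert i) := by
    have h4 : H.Reachable (p.getVert i) u := by
      have h5 := reachable_getVert_right p.reverse (p.length - i)
      rw [SimpleGraph.Walk.getVert_reverse] at h5
      have h3 : p.length - (p.length - i) = i := by omega
      rwa [h3] at h5
    exact h4.symm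
  have tri := dist_triangle' hru (reachable_getVert_right p i)
  omega

lemma dist_interior (p : H.Walk u v) (hp2 : 2 ≤ p.length) :
    H.dist (p.getVert 1) (p.getVert (p.length - 1)) ≤ p.length - 2 := by
  have h := dist_getVert_left (p.drop 1) (i := p.length - 2)
    (by rw [length_drop]; omega)
  rw [getVert_drop] at h
  have h2 : 1 + (p.length - 2) = p.length - 1 := by omega
  rw [h2] at h
  simpa using h

variable [DecidableEq V]

/-- Abstract core of the injectivity argument: two geodesics of length at least two with
the same (unordered) pair of end edges join the same pair of vertices. -/
lemma crux' {u v a b u' v' a' b' : V} {L L' : ℕ}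
    (hL : 2 ≤ L) (hL' : 2 ≤ L')
    (duv : H.dist u v = L) (dav : H.dist a v = L - 1)
    (dub : H.dist u b = L - 1) (dab : H.dist a b ≤ L - 2)
    (duv' : H.dist u' v' = L') (dav' : H.dist a' v' = L' - 1)
    (dub' : H.dist u' b' = L' - 1) (dab' : H.dist a' b' ≤ L' - 2)
    (heq : ({s(u, a), s(b, v)} : Finset (Sym2 V)) = {s(u', a'), s(b', v')}) :
    s(u, v) = s(u', v') := by
  have hself : ∀ x : V, H.dist x x = 0 := fun x => SimpleGraph.dist_self
  have fne : s(u, a) ≠ s(b, v) := by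
    intro h
    rw [Sym2.eq_iff] at h
    rcases h with ⟨h1, h2⟩ | ⟨h1, h2⟩
    · rw [← h1] at dub; rw [hself] at dub; omega
    · rw [← h1] at duv; rw [hself] at duv; omega
  have hmemf : s(u, a) = s(u', a') ∨ s(u, a) = s(b', v') := by
    have : s(u, a) ∈ ({s(u', a'), s(b', v')} : Finset (Sym2 V)) := by
      rw [← heq]; exact Finset.mem_insert_self _ _
    simpa using this
  have hmeml : s(b, v) = s(u', a') ∨ s(b, v) = s(b', v') := by
    have : s(b, v) ∈ ({s(u', a'), s(b', v')} : Finset (Sym2 V)) := by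
      rw [← heq]; exact Finset.mem_insert_of_mem (Finset.mem_singleton_self _)
    simpa using this
  rcases hmemf with hf | hf
  · have hl : s(b, v) = s(b', v') := by
      rcases hmeml with hl | hl
      · exact (fne (hf.trans hl.symm)).elim
      · exact hl
    rw [Sym2.eq_iff] at hf hl
    rcases hf with ⟨h1, h2⟩ | ⟨h1, h2⟩ <;> rcases hl with ⟨h3, h4⟩ | ⟨h3, h4⟩
    · subst h1; subst h4; rfl
    · subst h1; subst h2; subst h3; subst h4
      omega
    · subst h1; subst h2; subst h3; subst h4
      omega
    · subst h1; subst h2; subst h3; subst h4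
      omega
  · have hl : s(b, v) = s(u', a') := by
      rcases hmeml with hl | hl
      · exact hl
      · exact (fne (hf.trans hl.symm)).elim
    rw [Sym2.eq_iff] at hf hl
    rcases hf with ⟨h1, h2⟩ | ⟨h1, h2⟩ <;> rcases hl with ⟨h3, h4⟩ | ⟨h3, h4⟩
    · subst h1; subst h2; subst h3; subst h4
      rw [SimpleGraph.dist_comm] at duv' dav' dub' dab'
      omega
    · subst h1; subst h2; subst h3; subst h4
      rw [SimpleGraph.dist_comm] at duv' dav' dub' dab'
      omega
    · subst h1; subst h2; subst h3; subst h4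
      rw [SimpleGraph.dist_comm] at duv' dav' dub' dab'
      omega
    · subst h1; subst h2; subst h3; subst h4
      rw [SimpleGraph.dist_comm] at duv' dav' dub' dab'
      rw [Sym2.eq_swap]

lemma crux {u' v' : V} (p : H.Walk u v) (q : H.Walk u' v')
    (hp : p.length = H.dist u v) (hq : q.length = H.dist u' v')
    (hp2 : 2 ≤ p.length) (hq2 : 2 ≤ q.length)
    (heq : ({s(u, p.getVert 1), s(p.getVert (p.length - 1), v)} : Finset (Sym2 V)) =
      {s(u', q.getVert 1), s(q.getVert (q.length - 1), v')}) :
    s(u, v) = s(u', v') := by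
  have pf1 := (geodesic_getVert p hp (show 1 ≤ p.length by omega)).2
  have pf2 := (geodesic_getVert p hp (show p.length - 1 ≤ p.length by omega)).1
  have pf3 := dist_interior p hp2
  have qf1 := (geodesic_getVert q hq (show 1 ≤ q.length by omega)).2
  have qf2 := (geodesic_getVert q hq (show q.length - 1 ≤ q.length by omega)).1
  have qf3 := dist_interior q hq2
  exact crux' hp2 hq2 hp.symm pf1 pf2 pf3 hq.symm qf1 qf2 qf3 heq

lemma choose_two_succ (x : ℕ) : (x + 1).choose 2 = x.choose 2 + x := by
  rw [Nat.choose_two_right, Nat.choose_two_right, Nat.triangle_succ]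

lemma choose_two_superadd (x y : ℕ) :
    (x + 1).choose 2 + (y + 1).choose 2 ≤ (x + y + 1).choose 2 := by
  induction y with
  | zero => simp [Nat.choose]
  | succ y ih =>
    have h1 := choose_two_succ (y + 1)
    have h2 := choose_two_succ (x + y + 1)
    have h3 : x + (y + 1) + 1 = (x + y + 1) + 1 := by omega
    rw [h3, h2, h1]
    omega

lemma sum_choose_le {ι : Type*} (s : Finset ι) (f : ι → ℕ) (hf : ∀ i ∈ s, 1 ≤ f i) :
    ∑ i ∈ s, (f i).choose 2 ≤ ((∑ i ∈ s, (f i - 1)) + 1).choose 2 := by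
  induction s using Finset.cons_induction with
  | empty => simp
  | cons a s ha ih =>
    rw [Finset.sum_cons, Finset.sum_cons]
    have h1 : 1 ≤ f a := hf a (Finset.mem_cons_self a s)
    have h2 := choose_two_superadd (f a - 1) (∑ i ∈ s, (f i - 1))
    have hfa : (f a - 1) + 1 = f a := by omega
    rw [hfa] at h2
    have ih' := ih (fun i hi => hf i (Finset.mem_cons_of_mem hi))
    omega

lemma choose_split (s t : ℕ) : (s + t).choose 2 = s.choose 2 + t * s + t.choose 2 := by
  induction t with
  | zero => simp
  | succ t ih =>
    have h0 : s + (t + 1) = (s + t) + 1 := by omega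
    rw [h0, choose_two_succ (s + t), ih, choose_two_succ t, Nat.succ_mul]
    omega

end MCAux

open MCAux in
/-- The core counting bound: any MC-coloring of a graph satisfying the edge-count
hypotheses uses at most `m - t + 1` colors. -/
lemma mc_core {V : Type*} [Fintype V] (G : SimpleGraph V)
    (c : Sym2 V → ℕ) (hc : IsMCColoring G c) {n m t : ℕ}
    (hn : n = Fintype.card V) (hm : m = G.edgeSet.ncard) (ht : 2 ≤ t) (htn : t + 1 ≤ n)
    (h2 : m ≤ (n - t).choose 2 + t * (n - t) + (t - 2)) :
    (c '' G.edgeSet).ncard + (t - 1) ≤ m := by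
  classical
  set E : Finset (Sym2 V) := G.edgeFinset with hE
  have hmE : m = E.card := by
    rw [hm, ← Set.ncard_coe_finset, hE, SimpleGraph.coe_edgeFinset]
  have himg : (c '' G.edgeSet).ncard = (E.image c).card := by
    rw [← SimpleGraph.coe_edgeFinset, ← Finset.coe_image, Set.ncard_coe_finset, hE]
  set K := E.image c with hK
  have hsum : E.card = ∑ k ∈ K, (E.filter (fun e => c e = k)).card :=
    Finset.card_eq_sum_card_image c E
  have hek1 : ∀ k ∈ K, 1 ≤ (E.filter (fun e => c e = k)).card := by
    intro k hk
    obtain ⟨e, he, hce⟩ := Finset.mem_image.mp hk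
    exact Finset.card_pos.mpr ⟨e, Finset.mem_filter.mpr ⟨he, hce⟩⟩
  set W := ∑ k ∈ K, ((E.filter (fun e => c e = k)).card - 1) with hW
  have hKW : K.card + W = m := by
    have hsum2 : ∑ k ∈ K, (E.filter (fun e => c e = k)).card
        = ∑ k ∈ K, (1 + ((E.filter (fun e => c e = k)).card - 1)) :=
      Finset.sum_congr rfl (fun k hk => by have := hek1 k hk; omega)
    rw [hmE, hsum, hsum2, Finset.sum_add_distrib, Finset.sum_const, smul_eq_mul, mul_one, hW]
  rw [himg]
  suffices hWt : t - 1 ≤ W by omega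
  by_contra hWc
  push_neg at hWc
  have hWle : W ≤ t - 2 := by omega
  -- the color class graphs
  set Hg : ℕ → SimpleGraph V :=
    fun k => SimpleGraph.fromEdgeSet {e | e ∈ G.edgeSet ∧ c e = k} with hHg
  have hHsub : ∀ k x y, (Hg k).Adj x y → G.Adj x y ∧ c s(x, y) = k := by
    intro k x y hxy
    rw [hHg, SimpleGraph.fromEdgeSet_adj] at hxy
    exact ⟨hxy.1.1, hxy.1.2⟩
  -- the non-edges
  set D : Finset (Sym2 V) := (Finset.univ.filter (fun e : Sym2 V => ¬ e.IsDiag)) \ E with hD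
  have hEsub : E ⊆ Finset.univ.filter (fun e : Sym2 V => ¬ e.IsDiag) := by
    intro e he
    exact Finset.mem_filter.mpr ⟨Finset.mem_univ _,
      SimpleGraph.not_isDiag_of_mem_edgeFinset (G := G) he⟩
  have hfull : (Finset.univ.filter (fun e : Sym2 V => ¬ e.IsDiag)).card = n.choose 2 := by
    rw [hn, ← Sym2.card_subtype_not_diag, Fintype.card_subtype]
  have hDcard : D.card = n.choose 2 - m := by
    rw [hD, Finset.card_sdiff_of_subset hEsub, hfull, hmE]
  have hmn : m ≤ n.choose 2 := by
    rw [hmE, ← hfull]; exact Finset.card_le_card hEsub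
  -- the injection relation
  set R : Sym2 V → ℕ × Finset (Sym2 V) → Prop := fun e y =>
    ∃ (x z : V) (p : (Hg y.1).Walk x z), e = s(x, z) ∧ p.length = (Hg y.1).dist x z ∧
      2 ≤ p.length ∧ y.2 = {s(x, p.getVert 1), s(p.getVert (p.length - 1), z)} with hR
  set T : Finset (ℕ × Finset (Sym2 V)) :=
    K.biUnion (fun k => ((E.filter (fun e => c e = k)).powersetCard 2).image
      (fun s => (k, s))) with hT
  have hTcard : T.card ≤ ∑ k ∈ K, ((E.filter (fun e => c e = k)).card).choose 2 := by
    refine le_trans Finset.card_biUnion_le (Finset.sum_le_sum ?_)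
    intro k hk
    refine le_trans Finset.card_image_le ?_
    rw [Finset.card_powersetCard]
  have hexists : ∀ e ∈ D, ∃ y ∈ T, R e y := by
    intro e
    induction e using Sym2.ind with
    | _ x z =>
      intro he
      rw [hD, Finset.mem_sdiff, Finset.mem_filter] at he
      obtain ⟨⟨-, hnd⟩, hne⟩ := he
      have hxz : x ≠ z := fun h => hnd (by simp [h])
      have hnadj : ¬ G.Adj x z := fun h => hne (SimpleGraph.mem_edgeFinset.mpr h)
      obtain ⟨p₀, hp₀, k, hk⟩ := hc x z
      have hlen0 : p₀.length ≠ 0 := fun h => hxz (SimpleGraph.Walk.eq_of_length_eq_zero h)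
      have hkK : k ∈ K := by
        have hlist : p₀.edges ≠ [] := by
          intro h; apply hlen0; rw [← SimpleGraph.Walk.length_edges, h]; rfl
        obtain ⟨e₀, he₀⟩ := List.exists_mem_of_ne_nil _ hlist
        exact Finset.mem_image.mpr
          ⟨e₀, SimpleGraph.mem_edgeFinset.mpr (p₀.edges_subset_edgeSet he₀), hk e₀ he₀⟩
      have hsubE : ∀ e' ∈ p₀.edges, e' ∈ (Hg k).edgeSet := by
        intro e' he'
        rw [hHg, SimpleGraph.edgeSet_fromEdgeSet]
        exact ⟨⟨p₀.edges_subset_edgeSet he', hk e' he'⟩,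
          SimpleGraph.not_isDiag_of_mem_edgeSet G (p₀.edges_subset_edgeSet he')⟩
      have hreach : (Hg k).Reachable x z := ⟨p₀.transfer _ hsubE⟩
      obtain ⟨p, hp⟩ := hreach.exists_walk_length_eq_dist
      have hp2 : 2 ≤ p.length := by
        have hl0 : p.length ≠ 0 := fun h => hxz (SimpleGraph.Walk.eq_of_length_eq_zero h)
        have hl1 : p.length ≠ 1 := by
          intro h1
          have hadj := p.adj_getVert_succ (by omega : 0 < p.length)
          rw [SimpleGraph.Walk.getVert_zero] at hadj
          have hz : p.getVert 1 = z := by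
            have hgl := p.getVert_length
            rw [h1] at hgl
            exact hgl
          rw [hz] at hadj
          exact hnadj (hHsub k x z hadj).1
        omega
      have hadj1 : (Hg k).Adj x (p.getVert 1) := by
        have h := p.adj_getVert_succ (show 0 < p.length by omega)
        rwa [SimpleGraph.Walk.getVert_zero] at h
      have hadj2 : (Hg k).Adj (p.getVert (p.length - 1)) z := by
        have h := p.adj_getVert_succ (show p.length - 1 < p.length by omega)
        have h3 : p.length - 1 + 1 = p.length := by omega
        rw [h3, SimpleGraph.Walk.getVert_length] at h
        exact h
      have hfne : s(x, p.getVert 1) ≠ s(p.getVert (p.length - 1), z) := by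
        intro hcontra
        rw [Sym2.eq_iff] at hcontra
        have hgeo := (geodesic_getVert p hp (show p.length - 1 ≤ p.length by omega)).1
        rcases hcontra with ⟨h1, h2⟩ | ⟨h1, h2⟩
        · rw [← h1, SimpleGraph.dist_self] at hgeo; omega
        · exact (hxz h1).elim
      refine ⟨(k, {s(x, p.getVert 1), s(p.getVert (p.length - 1), z)}), ?_, ?_⟩
      · rw [hT]
        apply Finset.mem_biUnion.mpr
        refine ⟨k, hkK, Finset.mem_image.mpr ⟨_, ?_, rfl⟩⟩
        rw [Finset.mem_powersetCard]
        constructor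
        · intro e' he'
          rcases Finset.mem_insert.mp he' with h | h
          · subst h
            exact Finset.mem_filter.mpr
              ⟨SimpleGraph.mem_edgeFinset.mpr (hHsub k _ _ hadj1).1, (hHsub k _ _ hadj1).2⟩
          · rw [Finset.mem_singleton] at h
            subst h
            exact Finset.mem_filter.mpr
              ⟨SimpleGraph.mem_edgeFinset.mpr (hHsub k _ _ hadj2).1, (hHsub k _ _ hadj2).2⟩
        · exact Finset.card_pair hfne
      · rw [hR]
        exact ⟨x, z, p, rfl, hp, hp2, rfl⟩
  have hinj : ∀ y e₁ e₂, R e₁ y → R e₂ y → e₁ = e₂ := by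
    intro y e₁ e₂ h1 h2
    rw [hR] at h1 h2
    obtain ⟨x1, z1, p, rfl, hp, hp2, hpair1⟩ := h1
    obtain ⟨x2, z2, q, rfl, hq, hq2, hpair2⟩ := h2
    exact crux p q hp hq hp2 hq2 (hpair1.symm.trans hpair2)
  have hDT : D.card ≤ T.card := by
    refine Finset.card_le_card_of_injOn
      (fun e => if h : e ∈ D then (hexists e h).choose else (0, ∅)) ?_ ?_
    · intro e he
      simp only [dif_pos he]
      split_ifs with h
      · exact (hexists e h).choose_spec.1
      · exact (h he).elim
    · intro e1 h1 e2 h2 hfe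
      simp only [Finset.mem_coe] at h1 h2
      simp only [dif_pos h1, dif_pos h2] at hfe
      exact hinj _ _ _ ((hexists e1 h1).choose_spec.2)
        (hfe ▸ (hexists e2 h2).choose_spec.2)
  have hsumle : ∑ k ∈ K, ((E.filter (fun e => c e = k)).card).choose 2 ≤ (W + 1).choose 2 :=
    sum_choose_le K _ hek1
  have hmono : (W + 1).choose 2 ≤ (t - 1).choose 2 := Nat.choose_le_choose 2 (by omega)
  have hid : n.choose 2 = (n - t).choose 2 + t * (n - t) + t.choose 2 := by
    have h0 : n = (n - t) + t := by omega
    calc n.choose 2 = ((n - t) + t).choose 2 := by rw [← h0]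
      _ = (n - t).choose 2 + t * (n - t) + t.choose 2 := choose_split (n - t) t
  have hts : t.choose 2 = (t - 1).choose 2 + (t - 1) := by
    have h0 : t = (t - 1) + 1 := by omega
    conv_lhs => rw [h0]
    rw [choose_two_succ]
  -- final arithmetic contradiction
  set A := (n - t).choose 2 + t * (n - t) with hA
  set B1 := (t - 1).choose 2 with hB1
  set B2 := t.choose 2 with hB2
  set B3 := n.choose 2 with hB3
  set B4 := (W + 1).choose 2 with hB4
  set S := ∑ k ∈ K, ((E.filter (fun e => c e = k)).card).choose 2 with hS
  omega

/-- If `G` is connected with `n` vertices and `m` edges, `2 ≤ t ≤ n - 1` and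
`C(n-t,2) + t(n-t) ≤ m ≤ C(n-t,2) + t(n-t) + (t-2)`, then `mc(G) ≤ m - t + 1`. -/
theorem stmt_7 {V : Type*} [Fintype V] (G : SimpleGraph V) (hG : G.Connected)
    (n m t : ℕ) (hn : n = Fintype.card V) (hm : m = G.edgeSet.ncard)
    (ht : 2 ≤ t) (htn : t + 1 ≤ n)
    (h1 : (n - t).choose 2 + t * (n - t) ≤ m)
    (h2 : m ≤ (n - t).choose 2 + t * (n - t) + (t - 2)) :
    (mcNumber G : ℤ) ≤ (m : ℤ) - t + 1 := by
  have hmt : t ≤ m := by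
    have h3 : t * 1 ≤ t * (n - t) := Nat.mul_le_mul_left t (by omega)
    omega
  have key : ∀ x ∈ {k | ∃ c : Sym2 V → ℕ, IsMCColoring G c ∧ (c '' G.edgeSet).ncard = k},
      x + (t - 1) ≤ m := by
    rintro x ⟨c, hc, rfl⟩
    exact mc_core G c hc hn hm ht htn h2
  have hsup : mcNumber G + (t - 1) ≤ m := by
    rcases Set.eq_empty_or_nonempty
        {k | ∃ c : Sym2 V → ℕ, IsMCColoring G c ∧ (c '' G.edgeSet).ncard = k} with h | h
    · rw [mcNumber, h, csSup_empty]
      simp only [Nat.bot_eq_zero, Nat.zero_add]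
      omega
    · have hb : sSup {k | ∃ c : Sym2 V → ℕ, IsMCColoring G c ∧ (c '' G.edgeSet).ncard = k}
          ≤ m - (t - 1) := csSup_le h (fun x hx => by have := key x hx; omega)
      rw [mcNumber]
      omega
  omega
end
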